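/- arXiv:2305.07403 — 6 statements merged into one kernel-verified Lean document; each statement's English description precedes it below -/
import Mathlib

section
/- Let p ∈ ℝ[x_1,...,x_ℓ] be a quadratic polynomial with p(0) = 1, written uniquely as p = xᵀAx + bᵀx + 1 with A ∈ ℝ^{ℓ×ℓ} symmetric and b ∈ ℝ^ℓ. Then p is a real zero polynomial if and only if the symmetric matrix bbᵀ − 4A is positive semidefinite. -/
/-- A univariate real polynomial is real-rooted if it is nonzero and all of its
complex roots are real. -/
def RealRooted (f : Polynomial ℝ) : Prop :=
  f ≠ 0 ∧ ∀ z : ℂ, Polynomial.aeval z f = 0 → z.im = 0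

/-- A multivariate real polynomial is a real zero polynomial if its restriction to
every line through the origin is real-rooted. -/
def IsRealZero {σ : Type*} (p : MvPolynomial σ ℝ) : Prop :=
  ∀ a : σ → ℝ,
    RealRooted (MvPolynomial.aeval (fun i => Polynomial.C (a i) * Polynomial.X) p)

open Polynomial Matrix in
lemma quad_rr (α β : ℝ) :
    RealRooted (C α * X ^ 2 + C β * X + 1) ↔ 0 ≤ β ^ 2 - 4 * α := by
  constructor
  · intro ⟨_, h⟩
    by_contra hlt
    push_neg at hlt
    have hα : 0 < α := by nlinarith [sq_nonneg β]
    set s := Real.sqrt (4 * α - β ^ 2) with hs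
    have hs2 : s ^ 2 = 4 * α - β ^ 2 := Real.sq_sqrt (by linarith)
    have hspos : 0 < s := Real.sqrt_pos.mpr (by linarith)
    set z : ℂ := (-(β : ℂ) + s * Complex.I) / (2 * α) with hz
    have hαC : (α : ℂ) ≠ 0 := by exact_mod_cast hα.ne'
    have hroot : Polynomial.aeval z (C α * X ^ 2 + C β * X + 1) = 0 := by
      simp only [map_add, _root_.map_mul, map_pow, aeval_C, aeval_X, _root_.map_one,
        Complex.coe_algebraMap]
      rw [hz]
      have hI := Complex.I_sq
      have hs2C : (s : ℂ) ^ 2 = 4 * (α : ℂ) - (β : ℂ) ^ 2 := by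
        exact_mod_cast congrArg (Complex.ofReal) hs2
      field_simp
      ring_nf
      simp only [hI, hs2C]
      ring
    have hthis := h z hroot
    rw [hz] at hthis
    simp [Complex.div_im, Complex.add_im, Complex.mul_im, Complex.normSq_apply] at hthis
    rcases hthis with h | h
    exacts [absurd h hspos.ne', absurd h hα.ne']
  · intro hd
    refine ⟨?_, ?_⟩
    · intro hzero
      have := congrArg (fun f => Polynomial.eval 0 f) hzero
      simp at this
    · intro z hz
      simp only [map_add, _root_.map_mul, map_pow, aeval_C, aeval_X, _root_.map_one,
        Complex.coe_algebraMap] at hz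
      by_cases hα : α = 0
      · subst hα
        simp at hz
        by_cases hβ : β = 0
        · subst hβ; simp at hz
        · have hβC : (β : ℂ) ≠ 0 := by exact_mod_cast hβ
          have : z = -1 / β := by field_simp; linear_combination hz
          rw [this]
          simp [Complex.div_im]
      · set w : ℂ := 2 * α * z + β with hw
        have hw2 : w ^ 2 = ((β ^ 2 - 4 * α : ℝ) : ℂ) := by
          push_cast
          rw [hw]
          linear_combination (4 * (α:ℂ)) * hz
        have him : w.re * w.im = 0 := by
          have := congrArg Complex.im hw2
          simp [pow_two, Complex.mul_im] at this
          linarith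
        have hre : w.re ^ 2 - w.im ^ 2 = β ^ 2 - 4 * α := by
          have := congrArg Complex.re hw2
          simpa [pow_two, Complex.mul_re, sq] using this
        have hwim : w.im = 0 := by
          rcases mul_eq_zero.mp him with h | h
          · nlinarith [sq_nonneg w.im]
          · exact h
        have hwz : w.im = 2 * α * z.im := by
          simp [hw, Complex.add_im, Complex.mul_im]
        have hα' : (2:ℝ) * α ≠ 0 := by simpa using hα
        have h0 : 2 * α * z.im = 0 := by rw [← hwz, hwim]
        rcases mul_eq_zero.mp h0 with h | h
        · exact absurd h hα'
        · exact h

open Polynomial Matrix in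
theorem stmt1 (ℓ : ℕ) (A : Matrix (Fin ℓ) (Fin ℓ) ℝ) (hA : A.IsSymm) (b : Fin ℓ → ℝ) :
    IsRealZero ((∑ i, ∑ j, MvPolynomial.C (A i j) * MvPolynomial.X i * MvPolynomial.X j)
        + (∑ i, MvPolynomial.C (b i) * MvPolynomial.X i) + 1 : MvPolynomial (Fin ℓ) ℝ)
      ↔ (Matrix.vecMulVec b b - (4 : ℝ) • A).PosSemidef := by
  have key : ∀ a : Fin ℓ → ℝ,
      (MvPolynomial.aeval (fun i => Polynomial.C (a i) * Polynomial.X)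
        ((∑ i, ∑ j, MvPolynomial.C (A i j) * MvPolynomial.X i * MvPolynomial.X j)
          + (∑ i, MvPolynomial.C (b i) * MvPolynomial.X i) + 1 : MvPolynomial (Fin ℓ) ℝ))
      = C (∑ i, ∑ j, A i j * a i * a j) * X ^ 2 + C (∑ i, b i * a i) * X + 1 := by
    intro a
    simp only [map_add, map_sum, _root_.map_mul, _root_.map_one, MvPolynomial.aeval_X,
      MvPolynomial.aeval_C, Polynomial.algebraMap_eq, Finset.sum_mul]
    refine congrArg₂ (· + ·) (congrArg₂ (· + ·) ?_ ?_) rfl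
    · refine Finset.sum_congr rfl fun i _ => ?_
      exact Finset.sum_congr rfl fun j _ => by ring
    · exact Finset.sum_congr rfl fun i _ => by ring
  have quadform : ∀ a : Fin ℓ → ℝ,
      star a ⬝ᵥ (Matrix.vecMulVec b b - (4 : ℝ) • A) *ᵥ a
        = (∑ i, b i * a i) ^ 2 - 4 * (∑ i, ∑ j, A i j * a i * a j) := by
    intro a
    simp only [star_trivial, dotProduct, mulVec, Matrix.sub_apply, Matrix.smul_apply,
      Matrix.vecMulVec_apply, smul_eq_mul]
    rw [sq, Finset.sum_mul_sum, Finset.mul_sum, ← Finset.sum_sub_distrib]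
    refine Finset.sum_congr rfl fun i _ => ?_
    rw [Finset.mul_sum, Finset.mul_sum, ← Finset.sum_sub_distrib]
    exact Finset.sum_congr rfl fun j _ => by ring
  constructor
  · intro h
    refine Matrix.posSemidef_iff_dotProduct_mulVec.mpr ⟨?_, fun a => ?_⟩
    · ext i j
      simp only [Matrix.conjTranspose_apply, Matrix.sub_apply, Matrix.smul_apply,
        Matrix.vecMulVec_apply, star_trivial, smul_eq_mul]
      have := congrFun (congrFun hA i) j
      simp only [Matrix.transpose_apply] at this
      rw [this]; ring
    · rw [quadform a]
      have := (quad_rr _ _).mp (by rw [← key a]; exact h a)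
      linarith
  · intro h a
    rw [key a, quad_rr]
    have := (Matrix.posSemidef_iff_dotProduct_mulVec.mp h).2 a
    rw [quadform a] at this
    linarith
end

section
/- Let p ∈ ℝ[x_1,...,x_ℓ] be a homogeneous stable polynomial and let a ∈ ℝ^ℓ have all coordinates nonnegative with p(a) ≠ 0. Then the shifted polynomial p(a + x) (i.e., x ↦ p(a + x)) is a real zero polynomial. -/
/-- A multivariate real polynomial is stable if its restriction to every line with
strictly positive direction vector is real-rooted. -/
def IsStable {σ : Type*} (p : MvPolynomial σ ℝ) : Prop :=
  ∀ a b : σ → ℝ, (∀ i, 0 < a i) →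
    RealRooted (MvPolynomial.aeval
      (fun i => Polynomial.C (a i) * Polynomial.X + Polynomial.C (b i)) p)

section StableAux

open Polynomial MvPolynomial

variable {ℓ d : ℕ}

private lemma sum_eq_of_mem {p : MvPolynomial (Fin ℓ) ℝ} (h : p.IsHomogeneous d)
    {m : Fin ℓ →₀ ℕ} (hm : MvPolynomial.coeff m p ≠ 0) : (∑ i, m i) = d := by
  have h1 : Finsupp.degree m = d := by
    rw [Finsupp.degree_eq_weight_one]; exact h hm
  rw [← h1, Finsupp.degree]
  exact (Finset.sum_subset (Finset.subset_univ _) (fun i _ hi => by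
    simpa using Finsupp.notMem_support_iff.mp hi)).symm

private lemma aeval_expand {S : Type*} [CommSemiring S] [Algebra ℝ S]
    (p : MvPolynomial (Fin ℓ) ℝ) (f : Fin ℓ → S) :
    MvPolynomial.aeval f p
      = ∑ m ∈ p.support, algebraMap ℝ S (MvPolynomial.coeff m p) * ∏ i, f i ^ m i := by
  rw [MvPolynomial.aeval_def, MvPolynomial.eval₂_eq']

private lemma aeval_smul_eq {p : MvPolynomial (Fin ℓ) ℝ} (h : p.IsHomogeneous d)
    (z : ℂ) (w : Fin ℓ → ℂ) :
    MvPolynomial.aeval (fun i => z * w i) p = z ^ d * MvPolynomial.aeval w p := by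
  rw [_root_.aeval_expand, _root_.aeval_expand, Finset.mul_sum]
  refine Finset.sum_congr rfl fun m hm => ?_
  have hsum := sum_eq_of_mem h (MvPolynomial.mem_support_iff.mp hm)
  simp_rw [mul_pow]
  rw [Finset.prod_mul_distrib, Finset.prod_pow_eq_pow_sum, hsum]
  ring

private lemma coeff_prod_top {ι : Type*} (s : Finset ι) (f : ι → Polynomial ℂ) (n : ι → ℕ)
    (h : ∀ i ∈ s, (f i).natDegree ≤ n i) :
    (∏ i ∈ s, f i).coeff (∑ i ∈ s, n i) = ∏ i ∈ s, (f i).coeff (n i) := by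
  classical
  induction s using Finset.cons_induction with
  | empty => simp
  | cons a s ha ih =>
    rw [Finset.prod_cons, Finset.sum_cons, Finset.prod_cons,
      Polynomial.coeff_mul_add_eq_of_natDegree_le (h a (Finset.mem_cons_self a s))
        ((Polynomial.natDegree_prod_le _ _).trans
          (Finset.sum_le_sum fun i hi => h i (Finset.mem_cons_of_mem hi))),
      ih fun i hi => h i (Finset.mem_cons_of_mem hi)]

private lemma natDegree_lin_le (α β : ℂ) :
    (Polynomial.C α * Polynomial.X + Polynomial.C β).natDegree ≤ 1 := by
  refine (Polynomial.natDegree_add_le _ _).trans ?_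
  simp only [Polynomial.natDegree_C, max_le_iff]
  exact ⟨(Polynomial.natDegree_C_mul_le _ _).trans (by simp), by simp⟩

private lemma natDegree_Q_le {p : MvPolynomial (Fin ℓ) ℝ} (h : p.IsHomogeneous d)
    (α β : Fin ℓ → ℂ) :
    (MvPolynomial.aeval
      (fun i => Polynomial.C (α i) * Polynomial.X + Polynomial.C (β i)) p
        : Polynomial ℂ).natDegree ≤ d := by
  rw [_root_.aeval_expand]
  refine Polynomial.natDegree_sum_le_of_forall_le _ _ fun m hm => ?_
  rw [Polynomial.algebraMap_apply]
  refine (Polynomial.natDegree_C_mul_le _ _).trans ?_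
  refine (Polynomial.natDegree_prod_le _ _).trans ?_
  rw [← sum_eq_of_mem h (MvPolynomial.mem_support_iff.mp hm)]
  refine Finset.sum_le_sum fun i _ => ?_
  refine Polynomial.natDegree_pow_le.trans ?_
  exact le_trans (Nat.mul_le_mul_left _ (natDegree_lin_le (α i) (β i))) (by omega)

private lemma coeff_Q {p : MvPolynomial (Fin ℓ) ℝ} (h : p.IsHomogeneous d)
    (α β : Fin ℓ → ℂ) :
    (MvPolynomial.aeval
      (fun i => Polynomial.C (α i) * Polynomial.X + Polynomial.C (β i)) p
        : Polynomial ℂ).coeff d = MvPolynomial.aeval α p := by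
  rw [_root_.aeval_expand, _root_.aeval_expand, Polynomial.finset_sum_coeff]
  refine Finset.sum_congr rfl fun m hm => ?_
  rw [Polynomial.algebraMap_apply, Polynomial.coeff_C_mul,
    ← sum_eq_of_mem h (MvPolynomial.mem_support_iff.mp hm),
    coeff_prod_top _ _ _ (fun i _ => (Polynomial.natDegree_pow_le).trans
      (by have := natDegree_lin_le (α i) (β i); nlinarith))]
  congr 1
  refine Finset.prod_congr rfl fun i _ => ?_
  have h2 := Polynomial.coeff_pow_of_natDegree_le (m := m i) (natDegree_lin_le (α i) (β i))
  simp only [mul_one] at h2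
  rw [h2]
  simp

private lemma aeval_Q_eval (p : MvPolynomial (Fin ℓ) ℝ) (α β : Fin ℓ → ℂ) (s : ℂ) :
    Polynomial.eval s (MvPolynomial.aeval
      (fun i => Polynomial.C (α i) * Polynomial.X + Polynomial.C (β i)) p
        : Polynomial ℂ) = MvPolynomial.aeval (fun i => α i * s + β i) p := by
  have h := MvPolynomial.comp_aeval_apply
    (φ := ((Polynomial.aeval s : Polynomial ℂ →ₐ[ℂ] ℂ).restrictScalars ℝ))
    (f := fun i => Polynomial.C (α i) * Polynomial.X + Polynomial.C (β i)) p
  simpa using h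

private lemma aeval_R_eval (p : MvPolynomial (Fin ℓ) ℝ) (α β : Fin ℓ → ℝ) (z : ℂ) :
    Polynomial.aeval z (MvPolynomial.aeval
      (fun i => Polynomial.C (α i) * Polynomial.X + Polynomial.C (β i)) p : Polynomial ℝ)
      = MvPolynomial.aeval (fun i => (α i : ℂ) * z + (β i : ℂ)) p := by
  have h := MvPolynomial.comp_aeval_apply
    (φ := (Polynomial.aeval z : Polynomial ℝ →ₐ[ℝ] ℂ))
    (f := fun i => Polynomial.C (α i) * Polynomial.X + Polynomial.C (β i)) p
  simpa using h

private lemma aeval_conj (p : MvPolynomial (Fin ℓ) ℝ) (w : Fin ℓ → ℂ) :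
    MvPolynomial.aeval (fun i => (starRingEnd ℂ) (w i)) p
      = (starRingEnd ℂ) (MvPolynomial.aeval w p) := by
  have h := MvPolynomial.comp_aeval_apply (φ := Complex.conjAe.toAlgHom) (f := w) p
  simpa using h.symm

private lemma aeval_coe (p : MvPolynomial (Fin ℓ) ℝ) (a : Fin ℓ → ℝ) :
    MvPolynomial.aeval (fun i => ((a i : ℂ))) p = ((MvPolynomial.eval a p : ℝ) : ℂ) := by
  have h := MvPolynomial.comp_aeval_apply (φ := Algebra.ofId ℝ ℂ) (f := a) p
  simpa using h.symm

private lemma prod_abs_ge (c : ℝ) (hc : 0 ≤ c) (s₁ : ℂ) (t : Multiset ℂ)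
    (h : ∀ r ∈ t, c ≤ ‖s₁ - r‖) :
    c ^ Multiset.card t ≤ (t.map fun r => ‖s₁ - r‖).prod := by
  induction t using Multiset.induction_on with
  | empty => simp
  | cons a t ih =>
    rw [Multiset.map_cons, Multiset.prod_cons, Multiset.card_cons, pow_succ, mul_comm]
    exact mul_le_mul (h a (Multiset.mem_cons_self a t))
      (ih fun r hr => h r (Multiset.mem_cons_of_mem hr))
      (pow_nonneg hc _) (norm_nonneg _)

end StableAux

theorem stmt2 (ℓ d : ℕ) (p : MvPolynomial (Fin ℓ) ℝ) (hstable : IsStable p)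
    (hhom : p.IsHomogeneous d) (a : Fin ℓ → ℝ) (ha : ∀ i, 0 ≤ a i)
    (hpa : MvPolynomial.eval a p ≠ 0) :
    IsRealZero (MvPolynomial.aeval
      (fun i => MvPolynomial.C (a i) + MvPolynomial.X i) p) := by
  classical
  intro b
  -- upper half-plane nonvanishing
  have hupper : ∀ w : Fin ℓ → ℂ, (∀ i, 0 < (w i).im) → MvPolynomial.aeval w p ≠ 0 := by
    intro w hw hzero
    obtain ⟨-, hroots⟩ := hstable (fun i => (w i).im) (fun i => (w i).re) hw
    have him := hroots Complex.I ?_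
    · simp at him
    · rw [aeval_R_eval]
      rw [show (fun i => ((w i).im : ℂ) * Complex.I + ((w i).re : ℂ)) = w from
        funext fun i => by rw [add_comm]; exact Complex.re_add_im (w i)]
      exact hzero
  -- evaluation of the shifted polynomial composed with the line
  have hFeval : ∀ z : ℂ, Polynomial.aeval z
      (MvPolynomial.aeval (fun i => Polynomial.C (b i) * Polynomial.X)
        (MvPolynomial.aeval (fun i => MvPolynomial.C (a i) + MvPolynomial.X i) p))
      = MvPolynomial.aeval (fun i => (b i : ℂ) * z + (a i : ℂ)) p := by
    intro z
    rw [MvPolynomial.comp_aeval_apply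
      (φ := MvPolynomial.aeval (fun i => Polynomial.C (b i) * Polynomial.X))]
    simp only [map_add, MvPolynomial.aeval_C, MvPolynomial.aeval_X]
    rw [show (fun i => algebraMap ℝ (Polynomial ℝ) (a i) + Polynomial.C (b i) * Polynomial.X)
        = (fun i => Polynomial.C (b i) * Polynomial.X + Polynomial.C (a i)) from
      funext fun i => by rw [Polynomial.algebraMap_eq]; ring]
    exact aeval_R_eval p b a z
  constructor
  · -- nonvanishing of the restriction
    intro h0
    apply hpa
    have h1 := hFeval 0
    rw [h0] at h1
    simp only [map_zero] at h1
    rw [show (fun i => (b i : ℂ) * 0 + (a i : ℂ)) = (fun i => ((a i : ℂ))) from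
      funext fun i => by ring] at h1
    rw [aeval_coe] at h1
    exact_mod_cast h1.symm
  · intro z hz
    by_contra hzim
    have hz0 : z ≠ 0 := by rintro rfl; simp at hzim
    have hroot : MvPolynomial.aeval (fun i => (b i : ℂ) * z + (a i : ℂ)) p = 0 := by
      rw [← hFeval z, hz]
    have hroot2 : MvPolynomial.aeval (fun i => (a i : ℂ) * z⁻¹ + (b i : ℂ)) p = 0 := by
      rw [show (fun i => (a i : ℂ) * z⁻¹ + (b i : ℂ))
          = (fun i => z⁻¹ * ((b i : ℂ) * z + (a i : ℂ))) from
        funext fun i => by field_simp; ring]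
      rw [aeval_smul_eq hhom, hroot, mul_zero]
    have hinvim : (z⁻¹).im ≠ 0 := by
      rw [Complex.inv_im]
      have hnsq : Complex.normSq z ≠ 0 := by simpa [Complex.normSq_eq_zero] using hz0
      intro hcon
      apply hzim
      field_simp at hcon
      simpa using hcon
    obtain ⟨s₁, hs₁pos, hs₁root⟩ :
        ∃ s₁ : ℂ, 0 < s₁.im ∧ MvPolynomial.aeval (fun i => (a i : ℂ) * s₁ + (b i : ℂ)) p = 0 := by
      rcases hinvim.lt_or_gt with hneg | hpos
      · refine ⟨(starRingEnd ℂ) z⁻¹, by rw [Complex.conj_im]; linarith, ?_⟩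
        have hfun : (fun i => ((a i : ℂ)) * (starRingEnd ℂ) z⁻¹ + ((b i : ℂ)))
            = fun i => (starRingEnd ℂ) (((a i : ℂ)) * z⁻¹ + ((b i : ℂ))) :=
          funext fun i => by simp [Complex.conj_ofReal]
        rw [hfun, aeval_conj, hroot2, map_zero]
      · exact ⟨z⁻¹, hpos, hroot2⟩
    set c := s₁.im with hc
    set L := MvPolynomial.eval a p with hL
    have hLne : ((L : ℂ)) ≠ 0 := by exact_mod_cast hpa
    -- key lower bound for perturbed polynomials
    have key : ∀ ε : ℝ, 0 < ε →
        ‖(L : ℂ)‖ * c ^ d ≤ ‖MvPolynomial.aeval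
          (fun i => (a i : ℂ) * s₁ + ((b i : ℂ) + ε * Complex.I)) p‖ := by
      intro ε hε
      set Q : Polynomial ℂ := MvPolynomial.aeval
        (fun i => Polynomial.C ((a i : ℂ)) * Polynomial.X
          + Polynomial.C ((b i : ℂ) + ε * Complex.I)) p with hQ
      have hQc : Q.coeff d = (L : ℂ) := by rw [hQ, coeff_Q hhom, aeval_coe]
      have hQdeg : Q.natDegree = d :=
        le_antisymm (natDegree_Q_le hhom _ _)
          (Polynomial.le_natDegree_of_ne_zero (by rw [hQc]; exact hLne))
      have hQlead : Q.leadingCoeff = (L : ℂ) := by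
        rw [Polynomial.leadingCoeff, hQdeg, hQc]
      have hQne : Q ≠ 0 := fun h => hLne (by rw [← hQc, h, Polynomial.coeff_zero])
      have hroots_im : ∀ r ∈ Q.roots, r.im ≤ 0 := by
        intro r hr
        by_contra him
        push_neg at him
        have hr0 : Polynomial.eval r Q = 0 := (Polynomial.mem_roots hQne).mp hr
        rw [hQ, aeval_Q_eval] at hr0
        refine hupper _ (fun i => ?_) hr0
        simp only [Complex.add_im, Complex.mul_im, Complex.ofReal_re, Complex.ofReal_im,
          Complex.mul_re, Complex.I_im, Complex.I_re, Complex.ofReal_im]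
        nlinarith [ha i, him, hε]
      have hsplit : Q.roots.card = Q.natDegree :=
        Polynomial.splits_iff_card_roots.mp (IsAlgClosed.splits _)
      have hfac := Polynomial.C_leadingCoeff_mul_prod_multiset_X_sub_C hsplit
      have heval : ‖Polynomial.eval s₁ Q‖
          = ‖(L : ℂ)‖ * (Q.roots.map fun r => ‖s₁ - r‖).prod := by
        conv_lhs => rw [← hfac]
        rw [Polynomial.eval_mul, Polynomial.eval_C, norm_mul, hQlead]
        congr 1
        rw [Polynomial.eval_multiset_prod, Multiset.map_map, ← normHom_apply, map_multiset_prod, Multiset.map_map]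
        exact congrArg _ (Multiset.map_congr rfl fun r hr => by simp)
      have hprod : c ^ d ≤ (Q.roots.map fun r => ‖s₁ - r‖).prod := by
        have := prod_abs_ge c (le_of_lt hs₁pos) s₁ Q.roots (fun r hr => ?_)
        · rwa [hsplit, hQdeg] at this
        · have h1 : c ≤ (s₁ - r).im := by
            have := hroots_im r hr
            simp only [Complex.sub_im]
            linarith
          exact h1.trans (Complex.im_le_norm _)
      have hfin : ‖(L : ℂ)‖ * c ^ d ≤ ‖Polynomial.eval s₁ Q‖ := by
        rw [heval]
        exact mul_le_mul_of_nonneg_left hprod (norm_nonneg _)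
      rw [hQ, aeval_Q_eval] at hfin
      exact hfin
    -- continuity argument
    set G : Polynomial ℂ := MvPolynomial.aeval
      (fun i => Polynomial.C (1 : ℂ) * Polynomial.X
        + Polynomial.C ((a i : ℂ) * s₁ + (b i : ℂ))) p with hG
    have hGeval : ∀ u : ℂ, Polynomial.eval u G
        = MvPolynomial.aeval (fun i => (1 : ℂ) * u + ((a i : ℂ) * s₁ + (b i : ℂ))) p :=
      fun u => aeval_Q_eval p _ _ u
    have hG0 : Polynomial.eval 0 G = 0 := by
      rw [hGeval]
      rw [show (fun i => (1 : ℂ) * 0 + ((a i : ℂ) * s₁ + (b i : ℂ)))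
          = (fun i => (a i : ℂ) * s₁ + (b i : ℂ)) from funext fun i => by ring]
      exact hs₁root
    have hcont : Continuous fun ε : ℝ => ‖Polynomial.eval ((ε : ℂ) * Complex.I) G‖ :=
      continuous_norm.comp ((G.continuous).comp
        ((Complex.continuous_ofReal).mul continuous_const))
    have htend : Filter.Tendsto (fun ε : ℝ => ‖Polynomial.eval ((ε : ℂ) * Complex.I) G‖)
        (nhds 0) (nhds 0) := by
      have := hcont.tendsto 0
      simpa [hG0] using this
    have hposb : 0 < ‖(L : ℂ)‖ * c ^ d :=
      mul_pos (norm_pos_iff.mpr hLne) (pow_pos hs₁pos d)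
    obtain ⟨ε, hε0, hεlt⟩ : ∃ ε : ℝ, 0 < ε ∧
        ‖Polynomial.eval ((ε : ℂ) * Complex.I) G‖ < ‖(L : ℂ)‖ * c ^ d := by
      have hev : ∀ᶠ ε : ℝ in nhds 0,
          ‖Polynomial.eval ((ε : ℂ) * Complex.I) G‖ < ‖(L : ℂ)‖ * c ^ d :=
        htend.eventually_lt_const hposb
      have h2 := hev.filter_mono (nhdsWithin_le_nhds (s := Set.Ioi (0:ℝ)))
      have h3 : ∀ᶠ ε : ℝ in nhdsWithin 0 (Set.Ioi 0), 0 < ε :=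
        eventually_mem_nhdsWithin
      exact (h3.and h2).exists
    have hkey := key ε hε0
    have heq : ‖MvPolynomial.aeval
          (fun i => (a i : ℂ) * s₁ + ((b i : ℂ) + ε * Complex.I)) p‖
        = ‖Polynomial.eval ((ε : ℂ) * Complex.I) G‖ := by
      rw [hGeval, show (fun i => (1 : ℂ) * ((ε : ℂ) * Complex.I) + ((a i : ℂ) * s₁ + (b i : ℂ)))
          = fun i => (a i : ℂ) * s₁ + ((b i : ℂ) + (ε : ℂ) * Complex.I) from
        funext fun i => by ring]
    rw [heq] at hkey
    linarith
end

section
/- Let A, D, U ∈ ℝ^{d×d} where D is diagonal and U is orthogonal. Then Σ_{P ∈ S_d} det(A + PᵀDP) = Σ_{P ∈ S_d} det(A + UᵀPᵀDPU), where the sums range over all d×d permutation matrices P. -/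
open Matrix Finset

variable {d : ℕ}


noncomputable def pm (A : Matrix (Fin d) (Fin d) ℝ) (S : Finset (Fin d)) : ℝ :=
  (A.submatrix (fun i : {x // x ∈ S} => (i : Fin d)) (fun i : {x // x ∈ S} => (i : Fin d))).det

lemma det_piecewise_single (A : Matrix (Fin d) (Fin d) ℝ) (S : Finset (Fin d)) :
    (Matrix.of (S.piecewise (A : Fin d → Fin d → ℝ) (fun i => Pi.single i (1:ℝ)))).det = pm A S := by
  classical
  let e := Equiv.sumCompl (· ∈ S)
  rw [← Matrix.det_submatrix_equiv_self e]
  have he : (Matrix.of (S.piecewise (A : Fin d → Fin d → ℝ) (fun i => Pi.single i (1:ℝ)))).submatrix e e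
      = Matrix.fromBlocks
          (A.submatrix (fun i : {x // x ∈ S} => (i : Fin d)) (fun i : {x // x ∈ S} => (i : Fin d)))
          (A.submatrix (fun i : {x // x ∈ S} => (i : Fin d)) (fun i : {x // ¬ x ∈ S} => (i : Fin d)))
          0 1 := by
    ext i j
    rcases i with i | i <;> rcases j with j | j
    · simp [e, Finset.piecewise, i.2]
    · simp [e, Finset.piecewise, i.2]
    · simp only [Matrix.submatrix_apply, e, Equiv.sumCompl_apply_inr, Equiv.sumCompl_apply_inl,
        Matrix.of_apply, Finset.piecewise, i.2, ↓reduceIte, Matrix.fromBlocks_apply₂₁,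
        Matrix.zero_apply, Pi.single_apply]
      exact if_neg (fun h : (j:Fin d) = i => i.2 (h ▸ j.2))
    · simp only [Matrix.submatrix_apply, e, Equiv.sumCompl_apply_inr,
        Matrix.of_apply, Finset.piecewise, i.2, ↓reduceIte, Matrix.fromBlocks_apply₂₂,
        Matrix.one_apply, Pi.single_apply, Subtype.ext_iff, eq_comm]
  · rw [he, Matrix.det_fromBlocks_zero₂₁, Matrix.det_one, mul_one, pm]

lemma det_add_diagonal (A : Matrix (Fin d) (Fin d) ℝ) (c : Fin d → ℝ) :
    (A + diagonal c).det = ∑ S : Finset (Fin d), (∏ i ∈ Sᶜ, c i) * pm A S := by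
  classical
  have h := (Matrix.detRowAlternating : (Fin d → ℝ) [⋀^Fin d]→ₗ[ℝ] ℝ).toMultilinearMap.map_add_univ
    (A : Fin d → Fin d → ℝ) (diagonal c : Fin d → Fin d → ℝ)
  have hdet : (A + diagonal c).det
      = ∑ S : Finset (Fin d),
          Matrix.detRowAlternating (S.piecewise (A : Fin d → Fin d → ℝ) (diagonal c)) := h
  rw [hdet]
  refine Finset.sum_congr rfl fun S _ => ?_
  have hrow : S.piecewise (A : Fin d → Fin d → ℝ) (diagonal c)
      = fun i => (S.piecewise (fun _ => (1:ℝ)) c) i •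
          (S.piecewise (A : Fin d → Fin d → ℝ) (fun i => Pi.single i (1:ℝ))) i := by
    funext i
    by_cases hi : i ∈ S
    · simp [Finset.piecewise, hi]
    · funext j
      simp [Finset.piecewise, hi, Matrix.diagonal_apply, Pi.single_apply,
        mul_ite, eq_comm]
  have h2 : (Matrix.detRowAlternating (fun i => (S.piecewise (fun _ => (1:ℝ)) c) i •
          (S.piecewise (A : Fin d → Fin d → ℝ) (fun i => Pi.single i (1:ℝ))) i) : ℝ)
      = (∏ i, (S.piecewise (fun _ => (1:ℝ)) c) i) •
        Matrix.detRowAlternating (S.piecewise (A : Fin d → Fin d → ℝ) (fun i => Pi.single i (1:ℝ))) :=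
    (Matrix.detRowAlternating : (Fin d → ℝ) [⋀^Fin d]→ₗ[ℝ] ℝ).toMultilinearMap.map_smul_univ _ _
  rw [hrow, h2]
  have hprod : (∏ i, (S.piecewise (fun _ => (1:ℝ)) c) i) = ∏ i ∈ Sᶜ, c i := by
    rw [Finset.prod_piecewise]
    simp [Finset.compl_eq_univ_sdiff]
  rw [hprod]
  have := det_piecewise_single A S
  rw [smul_eq_mul]
  congr 1



lemma W_card (c : Fin d → ℝ) {T T' : Finset (Fin d)} (h : T.card = T'.card) :
    ∑ σ : Equiv.Perm (Fin d), ∏ i ∈ T, c (σ i)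
      = ∑ σ : Equiv.Perm (Fin d), ∏ i ∈ T', c (σ i) := by
  classical
  -- an equiv from T' to T and from T'ᶜ to Tᶜ
  let e1 : {x // x ∈ T'} ≃ {x // x ∈ T} := Finset.equivOfCardEq h.symm
  have hc : T'ᶜ.card = Tᶜ.card := by simp [Finset.card_compl, h]
  let e2 : {x // x ∈ T'ᶜ} ≃ {x // x ∈ Tᶜ} := Finset.equivOfCardEq hc
  let eT : {x // x ∈ Tᶜ} ≃ {x // ¬ x ∈ T} := Equiv.subtypeEquivRight (fun x => Finset.mem_compl)
  let eT' : {x // x ∈ T'ᶜ} ≃ {x // ¬ x ∈ T'} := Equiv.subtypeEquivRight (fun x => Finset.mem_compl)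
  let τ : Equiv.Perm (Fin d) :=
    ((Equiv.sumCompl (· ∈ T')).symm.trans
      ((e1.sumCongr ((eT'.symm.trans e2).trans eT)).trans (Equiv.sumCompl (· ∈ T))))
  have hτ : ∀ i ∈ T', τ i ∈ T := by
    intro i hi
    have : τ i = (e1 ⟨i, hi⟩ : Fin d) := by
      simp [τ, Equiv.sumCompl_symm_apply_of_pos hi]
    rw [this]
    exact (e1 ⟨i, hi⟩).2
  have himg : T'.image τ = T := by
    apply Finset.eq_of_subset_of_card_le
    · intro x hx
      rcases Finset.mem_image.mp hx with ⟨i, hi, rfl⟩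
      exact hτ i hi
    · rw [Finset.card_image_of_injective _ τ.injective, h]
  calc ∑ σ : Equiv.Perm (Fin d), ∏ i ∈ T, c (σ i)
      = ∑ σ : Equiv.Perm (Fin d), ∏ i ∈ T', c (σ (τ i)) := by
        refine Finset.sum_congr rfl fun σ _ => ?_
        rw [← himg, Finset.prod_image (fun x _ y _ hxy => τ.injective hxy)]
    _ = ∑ σ : Equiv.Perm (Fin d), ∏ i ∈ T', c (σ i) := by
        refine Fintype.sum_equiv (Equiv.mulRight τ) _ _ fun σ => ?_
        rfl

lemma coeff_eq (A : Matrix (Fin d) (Fin d) ℝ) (j : ℕ) :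
    (∑ S : Finset (Fin d), Polynomial.C (pm A S) * Polynomial.X ^ (Sᶜ.card)).coeff j
      = ∑ S ∈ Finset.univ.filter (fun S : Finset (Fin d) => Sᶜ.card = j), pm A S := by
  classical
  rw [Polynomial.finset_sum_coeff, Finset.sum_filter]
  refine Finset.sum_congr rfl fun S _ => ?_
  rw [Polynomial.coeff_C_mul, Polynomial.coeff_X_pow]
  by_cases hS : Sᶜ.card = j
  · simp [hS]
  · rw [if_neg (fun h => hS h.symm), mul_zero, if_neg hS]

lemma main_inv (A B : Matrix (Fin d) (Fin d) ℝ)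
    (hdet : ∀ x : ℝ, (A + diagonal (fun _ => x)).det = (B + diagonal (fun _ => x)).det)
    (v : ℕ → ℝ) :
    ∑ S : Finset (Fin d), pm A S * v Sᶜ.card = ∑ S : Finset (Fin d), pm B S * v Sᶜ.card := by
  classical
  have hp : (∑ S : Finset (Fin d), Polynomial.C (pm A S) * Polynomial.X ^ (Sᶜ.card))
      = (∑ S : Finset (Fin d), Polynomial.C (pm B S) * Polynomial.X ^ (Sᶜ.card)) := by
    apply Polynomial.funext
    intro x
    have eA : (∑ S : Finset (Fin d), Polynomial.C (pm A S) * Polynomial.X ^ (Sᶜ.card)).eval x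
        = (A + diagonal (fun _ => x)).det := by
      rw [det_add_diagonal, Polynomial.eval_finset_sum]
      refine Finset.sum_congr rfl fun S _ => ?_
      rw [Polynomial.eval_mul, Polynomial.eval_C, Polynomial.eval_pow, Polynomial.eval_X,
        Finset.prod_const, mul_comm]
    have eB : (∑ S : Finset (Fin d), Polynomial.C (pm B S) * Polynomial.X ^ (Sᶜ.card)).eval x
        = (B + diagonal (fun _ => x)).det := by
      rw [det_add_diagonal, Polynomial.eval_finset_sum]
      refine Finset.sum_congr rfl fun S _ => ?_
      rw [Polynomial.eval_mul, Polynomial.eval_C, Polynomial.eval_pow, Polynomial.eval_X,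
        Finset.prod_const, mul_comm]
    rw [eA, eB, hdet]
  have hms : ∀ j : ℕ,
      ∑ S ∈ Finset.univ.filter (fun S : Finset (Fin d) => Sᶜ.card = j), pm A S
        = ∑ S ∈ Finset.univ.filter (fun S : Finset (Fin d) => Sᶜ.card = j), pm B S := by
    intro j
    rw [← coeff_eq, ← coeff_eq, hp]
  have hmaps : ∀ S : Finset (Fin d), S ∈ Finset.univ → Sᶜ.card ∈ Finset.range (d + 1) := by
    intro S _
    rw [Finset.mem_range, Nat.lt_succ_iff]
    simpa using Finset.card_le_univ (Sᶜ)
  rw [← Finset.sum_fiberwise_of_maps_to hmaps (fun S => pm A S * v Sᶜ.card),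
      ← Finset.sum_fiberwise_of_maps_to hmaps (fun S => pm B S * v Sᶜ.card)]
  refine Finset.sum_congr rfl fun j _ => ?_
  have inner : ∀ C : Matrix (Fin d) (Fin d) ℝ,
      ∑ S ∈ Finset.univ.filter (fun S : Finset (Fin d) => Sᶜ.card = j), pm C S * v Sᶜ.card
        = (∑ S ∈ Finset.univ.filter (fun S : Finset (Fin d) => Sᶜ.card = j), pm C S) * v j := by
    intro C
    rw [Finset.sum_mul]
    refine Finset.sum_congr rfl fun S hS => ?_
    rw [(Finset.mem_filter.mp hS).2]
  rw [inner, inner, hms]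

noncomputable def vfun (d : ℕ) (c : Fin d → ℝ) (j : ℕ) : ℝ :=
  if h : j ≤ d then
    ∑ σ : Equiv.Perm (Fin d), ∏ i ∈ Finset.univ.map (Fin.castLEEmb h), c (σ i)
  else 0

lemma hvf (c : Fin d → ℝ) (T : Finset (Fin d)) :
    (∑ σ : Equiv.Perm (Fin d), ∏ i ∈ T, c (σ i)) = vfun d c T.card := by
  have hT : T.card ≤ d := by simpa using Finset.card_le_univ T
  rw [vfun, dif_pos hT]
  exact W_card c (by simp)

theorem stmt5 (d : ℕ) (A D U : Matrix (Fin d) (Fin d) ℝ)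
    (hD : D.IsDiag) (hU : Uᵀ * U = 1) :
    ∑ P : Equiv.Perm (Fin d),
        (A + (P.permMatrix ℝ)ᵀ * D * P.permMatrix ℝ).det
      = ∑ P : Equiv.Perm (Fin d),
        (A + Uᵀ * (P.permMatrix ℝ)ᵀ * D * P.permMatrix ℝ * U).det := by
  classical
  set c : Fin d → ℝ := fun i => D i i with hc
  have hDc : D = diagonal c := (hD.diagonal_diag).symm
  have hUU : U * Uᵀ = 1 := mul_eq_one_comm.mp hU
  set B := U * A * Uᵀ with hB
  have hdUV : U.det * Uᵀ.det = 1 := by rw [← Matrix.det_mul, hUU, Matrix.det_one]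
  have hperm : ∀ σ : Equiv.Perm (Fin d),
      (σ.permMatrix ℝ)ᵀ * D * σ.permMatrix ℝ = diagonal (fun i => c (σ.symm i)) := by
    intro σ
    rw [hDc]
    rw [show ((σ.permMatrix ℝ)ᵀ : Matrix (Fin d) (Fin d) ℝ)
        = (σ.symm.toPEquiv.toMatrix : Matrix (Fin d) (Fin d) ℝ) by
      rw [Equiv.toPEquiv_symm, PEquiv.toMatrix_symm]]
    rw [PEquiv.toMatrix_toPEquiv_mul, PEquiv.mul_toMatrix_toPEquiv, Matrix.submatrix_submatrix,
      Function.comp_id, Function.id_comp, Matrix.submatrix_diagonal _ _ σ.symm.injective]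
    rfl
  -- similarity invariance of det (· + x • 1)
  have hdet : ∀ x : ℝ, (A + diagonal (fun _ => x)).det = (B + diagonal (fun _ => x)).det := by
    intro x
    have hsm : (diagonal (fun _ : Fin d => x) : Matrix (Fin d) (Fin d) ℝ)
        = x • (1 : Matrix (Fin d) (Fin d) ℝ) := by
      ext i j
      by_cases h : i = j <;>
        simp [Matrix.diagonal_apply, Matrix.one_apply, Matrix.smul_apply, h]
    have h1 : U * (A + diagonal (fun _ : Fin d => x)) * Uᵀ = B + diagonal (fun _ : Fin d => x) := by
      rw [Matrix.mul_add, Matrix.add_mul, hB]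
      congr 1
      rw [hsm, Matrix.mul_smul, Matrix.mul_one, Matrix.smul_mul, hUU]
    calc (A + diagonal (fun _ : Fin d => x)).det
        = (U * (A + diagonal (fun _ : Fin d => x)) * Uᵀ).det := by
          rw [Matrix.det_mul, Matrix.det_mul]
          linear_combination (-(A + diagonal (fun _ : Fin d => x)).det) * hdUV
      _ = (B + diagonal (fun _ : Fin d => x)).det := by rw [h1]
  -- RHS terms
  have hR : ∀ σ : Equiv.Perm (Fin d),
      (A + Uᵀ * (σ.permMatrix ℝ)ᵀ * D * σ.permMatrix ℝ * U).det
        = (B + diagonal (fun i => c (σ.symm i))).det := by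
    intro σ
    have h2 : A + Uᵀ * (σ.permMatrix ℝ)ᵀ * D * σ.permMatrix ℝ * U
        = Uᵀ * (B + (σ.permMatrix ℝ)ᵀ * D * σ.permMatrix ℝ) * U := by
      rw [Matrix.mul_add, Matrix.add_mul, hB]
      congr 1
      · simp only [← Matrix.mul_assoc]
        rw [hU, Matrix.one_mul, Matrix.mul_assoc, hU, Matrix.mul_one]
      · simp only [Matrix.mul_assoc]
    rw [h2, hperm σ, Matrix.det_mul, Matrix.det_mul]
    have hdVU : Uᵀ.det * U.det = 1 := by rw [← Matrix.det_mul, hU, Matrix.det_one]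
    linear_combination (B + diagonal (fun i => c (σ.symm i))).det * hdVU
  -- main computation
  have key : ∀ C : Matrix (Fin d) (Fin d) ℝ,
      (∑ σ : Equiv.Perm (Fin d), (C + diagonal (fun i => c (σ.symm i))).det)
        = ∑ S : Finset (Fin d), pm C S * vfun d c Sᶜ.card := by
    intro C
    calc (∑ σ : Equiv.Perm (Fin d), (C + diagonal (fun i => c (σ.symm i))).det)
        = ∑ σ : Equiv.Perm (Fin d), ∑ S : Finset (Fin d),
            (∏ i ∈ Sᶜ, c (σ.symm i)) * pm C S := by
          exact Finset.sum_congr rfl fun σ _ => det_add_diagonal C (fun i => c (σ.symm i))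
      _ = ∑ S : Finset (Fin d), ∑ σ : Equiv.Perm (Fin d),
            (∏ i ∈ Sᶜ, c (σ.symm i)) * pm C S := Finset.sum_comm
      _ = ∑ S : Finset (Fin d), pm C S * vfun d c Sᶜ.card := by
          refine Finset.sum_congr rfl fun S _ => ?_
          rw [← Finset.sum_mul, mul_comm]
          congr 1
          rw [← hvf]
          exact Fintype.sum_equiv (Equiv.inv (Equiv.Perm (Fin d))) _ _ (fun σ => rfl)
  calc ∑ σ : Equiv.Perm (Fin d), (A + (σ.permMatrix ℝ)ᵀ * D * σ.permMatrix ℝ).det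
      = ∑ σ : Equiv.Perm (Fin d), (A + diagonal (fun i => c (σ.symm i))).det := by
        exact Finset.sum_congr rfl fun σ _ => by rw [hperm σ]
    _ = ∑ S : Finset (Fin d), pm A S * vfun d c Sᶜ.card := key A
    _ = ∑ S : Finset (Fin d), pm B S * vfun d c Sᶜ.card := main_inv A B hdet _
    _ = ∑ σ : Equiv.Perm (Fin d), (B + diagonal (fun i => c (σ.symm i))).det := (key B).symm
    _ = ∑ σ : Equiv.Perm (Fin d), (A + Uᵀ * (σ.permMatrix ℝ)ᵀ * D * σ.permMatrix ℝ * U).det := by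
        exact Finset.sum_congr rfl fun σ _ => (hR σ).symm
end

section
/- For all matrices A, D ∈ ℝ^{d×d} with D diagonal, (1/d!) Σ_{P ∈ S_d} det(A + PᵀDP) = ∫_{O_d} det(A + UᵀDU) dU, where the sum ranges over all d×d permutation matrices P and the integral is with respect to the Haar probability measure on the orthogonal group O_d. -/
open Matrix MeasureTheory Finset

noncomputable instance (d : ℕ) :
    MeasurableSpace (Matrix.orthogonalGroup (Fin d) ℝ) := borel _

instance (d : ℕ) : BorelSpace (Matrix.orthogonalGroup (Fin d) ℝ) := ⟨rfl⟩

section Abstract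

variable {d : ℕ}

/-- indicator of a finset as a real vector -/
def indf (S : Finset (Fin d)) : Fin d → ℝ := fun j => if j ∈ S then 1 else 0


/-- Bernstein-type expansion of a multi-affine function over subsets of `T`. -/
theorem bern_expand {g : (Fin d → ℝ) → ℝ}
    (hg : ∀ x i t, g (Function.update x i t)
      = (1 - t) * g (Function.update x i 0) + t * g (Function.update x i 1)) :
    ∀ (T : Finset (Fin d)) (x : Fin d → ℝ),
      g x = ∑ S ∈ T.powerset,
        ((∏ i ∈ S, x i) * ∏ i ∈ T \ S, (1 - x i)) *
          g (fun j => if j ∈ S then 1 else if j ∈ T then 0 else x j) := by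
  intro T
  induction T using Finset.induction_on with
  | empty =>
    intro x
    simp
  | @insert a T ha ih =>
    intro x
    rw [Finset.sum_powerset_insert ha]
    have key : ∀ S ∈ T.powerset,
        g (fun j => if j ∈ S then 1 else if j ∈ T then 0 else x j)
          = (1 - x a) * g (fun j => if j ∈ S then (1:ℝ) else if j ∈ insert a T then 0 else x j)
            + x a * g (fun j => if j ∈ insert a S then (1:ℝ) else if j ∈ insert a T then 0 else x j) := by
      intro S hS
      rw [Finset.mem_powerset] at hS
      have haS : a ∉ S := fun h => ha (hS h)
      set y : Fin d → ℝ := fun j => if j ∈ S then 1 else if j ∈ T then 0 else x j with hy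
      have h1 : y = Function.update y a (x a) := by
        funext j
        by_cases hj : j = a
        · subst hj; simp [hy, haS, ha]
        · rw [Function.update_of_ne hj]
      have h0 : Function.update y a 0
          = fun j => if j ∈ S then (1:ℝ) else if j ∈ insert a T then 0 else x j := by
        funext j
        by_cases hj : j = a
        · subst hj; simp [haS]
        · rw [Function.update_of_ne hj]
          simp only [hy, Finset.mem_insert, hj, false_or]
      have h1' : Function.update y a 1
          = fun j => if j ∈ insert a S then (1:ℝ) else if j ∈ insert a T then 0 else x j := by
        funext j
        by_cases hj : j = a
        · subst hj; simp
        · rw [Function.update_of_ne hj]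
          simp only [hy, Finset.mem_insert, hj, false_or]
      conv_lhs => rw [h1]
      rw [hg y a (x a), h0, h1']
    calc g x = ∑ S ∈ T.powerset,
        ((∏ i ∈ S, x i) * ∏ i ∈ T \ S, (1 - x i)) *
          g (fun j => if j ∈ S then 1 else if j ∈ T then 0 else x j) := ih x
      _ = ∑ S ∈ T.powerset,
          (((∏ i ∈ S, x i) * ∏ i ∈ insert a T \ S, (1 - x i)) *
            g (fun j => if j ∈ S then 1 else if j ∈ insert a T then 0 else x j)
          + ((∏ i ∈ insert a S, x i) * ∏ i ∈ insert a T \ insert a S, (1 - x i)) *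
            g (fun j => if j ∈ insert a S then 1 else if j ∈ insert a T then 0 else x j)) := by
          refine Finset.sum_congr rfl fun S hS => ?_
          rw [key S hS]
          have hS' : S ⊆ T := Finset.mem_powerset.mp hS
          have haS : a ∉ S := fun h => ha (hS' h)
          have e1 : insert a T \ S = insert a (T \ S) := by
            ext j; simp only [Finset.mem_sdiff, Finset.mem_insert]
            constructor
            · rintro ⟨h1 | h1, h2⟩
              · exact Or.inl h1
              · exact Or.inr ⟨h1, h2⟩
            · rintro (h1 | ⟨h1, h2⟩)
              · exact ⟨Or.inl h1, h1 ▸ haS⟩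
              · exact ⟨Or.inr h1, h2⟩
          have e2 : insert a T \ insert a S = T \ S := by
            ext j; simp only [Finset.mem_sdiff, Finset.mem_insert]
            constructor
            · rintro ⟨h1 | h1, h2⟩
              · exact absurd (Or.inl h1) h2
              · exact ⟨h1, fun hj => h2 (Or.inr hj)⟩
            · rintro ⟨h1, h2⟩
              exact ⟨Or.inr h1, fun hj => hj.elim (fun hh => ha (hh ▸ h1)) h2⟩
          have haTS : a ∉ T \ S := fun h => ha (Finset.mem_sdiff.mp h).1
          rw [e1, e2, Finset.prod_insert haTS, Finset.prod_insert haS]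
          ring
      _ = _ := by rw [Finset.sum_add_distrib]

theorem indf_card_eq (S T : Finset (Fin d)) (h : S.card = T.card) :
    ∃ σ : Equiv.Perm (Fin d), indf T ∘ σ = indf S := by
  classical
  have hc : Sᶜ.card = Tᶜ.card := by simp [Finset.card_compl, h]
  let e : {x // x ∈ S} ≃ {x // x ∈ T} := Finset.equivOfCardEq h
  let f0 : {x : Fin d // x ∈ Sᶜ} ≃ {x : Fin d // x ∈ Tᶜ} := Finset.equivOfCardEq hc
  let f : {x : Fin d // ¬ x ∈ S} ≃ {x : Fin d // ¬ x ∈ T} :=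
    ((Equiv.subtypeEquivRight fun x => (Finset.mem_compl (s := S)).symm).trans f0).trans
      (Equiv.subtypeEquivRight fun x => Finset.mem_compl (s := T))
  refine ⟨Equiv.subtypeCongr e f, ?_⟩
  funext j
  simp only [Function.comp_apply, indf]
  by_cases hj : j ∈ S
  · have : Equiv.subtypeCongr e f j = (e ⟨j, hj⟩ : Fin d) := by
      simp [Equiv.subtypeCongr, hj]
    rw [this]
    simp [hj, (e ⟨j, hj⟩).2]
  · have : Equiv.subtypeCongr e f j = (f ⟨j, hj⟩ : Fin d) := by
      simp [Equiv.subtypeCongr, hj]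
    rw [this]
    have := (f ⟨j, hj⟩).2
    simp [hj, this]

theorem symm_multiaffine_eq_zero {g : (Fin d → ℝ) → ℝ}
    (hsym : ∀ (σ : Equiv.Perm (Fin d)) (x : Fin d → ℝ), g (x ∘ σ) = g x)
    (hg : ∀ (x : Fin d → ℝ) (i : Fin d), ∃ a b : ℝ, ∀ t, g (Function.update x i t) = a + t * b)
    (hdiag : ∀ t : ℝ, g (fun _ => t) = 0) :
    ∀ x, g x = 0 := by
  classical
  -- multi-affine in Bernstein form
  have haff : ∀ x i t, g (Function.update x i t)
      = (1 - t) * g (Function.update x i 0) + t * g (Function.update x i 1) := by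
    intro x i t
    obtain ⟨a, b, hab⟩ := hg x i
    rw [hab t, hab 0, hab 1]; ring
  have hbern := bern_expand haff
  -- the bern evaluation functions are indicators when T = univ
  have hfun : ∀ (S : Finset (Fin d)) (x : Fin d → ℝ),
      (fun j => if j ∈ S then (1:ℝ) else if j ∈ (univ : Finset (Fin d)) then 0 else x j)
        = indf S := by
    intro S x; funext j; simp [indf]
  have hcard : ∀ S T : Finset (Fin d), S.card = T.card → g (indf S) = g (indf T) := by
    intro S T h
    obtain ⟨σ, hσ⟩ := indf_card_eq S T h
    rw [← hσ, hsym]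
  -- diagonal expansion
  have hdiag2 : ∀ t : ℝ,
      (∑ S ∈ (univ : Finset (Fin d)).powerset,
        t ^ S.card * (1 - t) ^ (d - S.card) * g (indf S)) = 0 := by
    intro t
    have hb := hbern univ (fun _ => t)
    rw [hdiag t] at hb
    calc (∑ S ∈ (univ : Finset (Fin d)).powerset,
          t ^ S.card * (1 - t) ^ (d - S.card) * g (indf S))
        = ∑ S ∈ (univ : Finset (Fin d)).powerset,
          ((∏ _i ∈ S, t) * ∏ _i ∈ univ \ S, (1 - t)) *
            g (fun j => if j ∈ S then 1 else if j ∈ (univ : Finset (Fin d)) then 0 else t) := by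
          refine Finset.sum_congr rfl fun S hS => ?_
          have hsub : S ⊆ univ := Finset.mem_powerset.mp hS
          rw [hfun S, Finset.prod_const, Finset.prod_const, Finset.card_sdiff_of_subset hsub,
            Finset.card_univ, Fintype.card_fin]
      _ = 0 := hb.symm
  -- the polynomial
  set q : Polynomial ℝ := ∑ S ∈ (univ : Finset (Fin d)).powerset,
      Polynomial.C (g (indf S)) * Polynomial.X ^ S.card with hq
  have hqeval : ∀ u : ℝ, u ≠ -1 → q.eval u = 0 := by
    intro u hu
    have h1u : (1:ℝ) + u ≠ 0 := fun h => hu (by linarith)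
    set t : ℝ := u / (1 + u) with ht
    have h1t : 1 - t = 1 / (1 + u) := by
      rw [ht]; field_simp; ring
    have key : ∀ S ∈ (univ : Finset (Fin d)).powerset,
        g (indf S) * u ^ S.card
          = (1 + u) ^ d * (t ^ S.card * (1 - t) ^ (d - S.card) * g (indf S)) := by
      intro S hS
      have hk : S.card ≤ d := by
        simpa using Finset.card_le_univ S
      rw [h1t, ht, div_pow, div_pow, one_pow]
      rw [show (1 + u) ^ d = (1 + u) ^ S.card * (1 + u) ^ (d - S.card) by
        rw [← pow_add, Nat.add_sub_cancel' hk]]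
      have h1 : (1 + u) ^ S.card * ((1 + u) ^ S.card)⁻¹ = 1 := mul_inv_cancel₀ (pow_ne_zero _ h1u)
      have h2 : (1 + u) ^ (d - S.card) * ((1 + u) ^ (d - S.card))⁻¹ = 1 :=
        mul_inv_cancel₀ (pow_ne_zero _ h1u)
      linear_combination (-(g (indf S)) * u ^ S.card) * h1
        + (-(g (indf S)) * u ^ S.card * (1 + u) ^ S.card * ((1 + u) ^ S.card)⁻¹) * h2
    have : q.eval u = ∑ S ∈ (univ : Finset (Fin d)).powerset, g (indf S) * u ^ S.card := by
      rw [hq, Polynomial.eval_finset_sum]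
      refine Finset.sum_congr rfl fun S _ => ?_
      simp
    rw [this, Finset.sum_congr rfl key, ← Finset.mul_sum, hdiag2, mul_zero]
  have hq0 : q = 0 := by
    apply Polynomial.eq_zero_of_infinite_isRoot
    apply Set.Infinite.mono (s := {x : ℝ | x ≠ -1})
    · intro x hx; exact hqeval x hx
    · have : ({x : ℝ | x ≠ -1}) = ({-1}ᶜ : Set ℝ) := rfl
      rw [this]
      exact (Set.finite_singleton (-1:ℝ)).infinite_compl
  -- indicator values vanish
  have hind0 : ∀ S : Finset (Fin d), g (indf S) = 0 := by
    intro S0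
    have hcoeff : q.coeff S0.card = 0 := by rw [hq0]; simp
    rw [hq, Polynomial.finset_sum_coeff] at hcoeff
    have : ∀ S ∈ (univ : Finset (Fin d)).powerset,
        (Polynomial.C (g (indf S)) * Polynomial.X ^ S.card).coeff S0.card
          = if S.card = S0.card then g (indf S0) else 0 := by
      intro S _
      rw [Polynomial.coeff_C_mul, Polynomial.coeff_X_pow]
      by_cases h : S.card = S0.card
      · rw [if_pos h.symm, if_pos h, mul_one, hcard S S0 h]
      · rw [if_neg (Ne.symm h), if_neg h, mul_zero]
    rw [Finset.sum_congr rfl this, ← Finset.sum_filter, ← Finset.powersetCard_eq_filter,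
      Finset.sum_const, Finset.card_powersetCard, Finset.card_univ, Fintype.card_fin,
      nsmul_eq_mul] at hcoeff
    have hchoose : (0:ℝ) < (d.choose S0.card : ℝ) := by
      have : 0 < d.choose S0.card := Nat.choose_pos (by simpa using Finset.card_le_univ S0)
      exact_mod_cast this
    exact (mul_eq_zero.mp hcoeff).resolve_left (ne_of_gt hchoose)
  -- conclusion
  intro x
  rw [hbern univ x]
  refine Finset.sum_eq_zero fun S hS => ?_
  rw [hfun S x, hind0 S, mul_zero]

end Abstract

section Mats

variable {d : ℕ}

theorem det_diag_affine (B : Matrix (Fin d) (Fin d) ℝ) (c : Fin d → ℝ) (i : Fin d) (t : ℝ) :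
    (B + diagonal (Function.update c i t)).det
      = (B + diagonal (Function.update c i 0)).det
        + t * ((B + diagonal (Function.update c i 0)).updateRow i (Pi.single i 1)).det := by
  classical
  set B0 := B + diagonal (Function.update c i 0) with hB0
  have hrepr : B + diagonal (Function.update c i t)
      = B0.updateRow i (B0 i + t • (Pi.single i 1 : Fin d → ℝ)) := by
    ext p q
    by_cases hp : p = i
    · subst hp
      rw [Matrix.updateRow_self]
      by_cases hq : q = p
      · subst hq
        simp [hB0, Matrix.diagonal_apply, Function.update, Pi.single_apply]
      · simp [hB0, Matrix.diagonal_apply, Ne.symm hq, hq, Pi.single_apply]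
    · rw [Matrix.updateRow_ne hp]
      simp only [hB0, Matrix.add_apply, Matrix.diagonal_apply]
      congr 1
      by_cases hpq : p = q
      · subst hpq; simp [Function.update, hp]
      · simp [hpq]
  rw [hrepr, Matrix.det_updateRow_add, Matrix.det_updateRow_smul, Matrix.updateRow_eq_self]

theorem perm_conj (c : Fin d → ℝ) (σ : Equiv.Perm (Fin d)) :
    (σ.permMatrix ℝ)ᵀ * diagonal c * σ.permMatrix ℝ = diagonal (c ∘ ⇑σ⁻¹) := by
  have h1 : (σ.permMatrix ℝ)ᵀ = (σ⁻¹).permMatrix ℝ := by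
    rw [Equiv.Perm.permMatrix, Equiv.Perm.permMatrix, ← PEquiv.toMatrix_symm,
      ← Equiv.toPEquiv_symm]
    rfl
  rw [h1, Equiv.Perm.permMatrix, Equiv.Perm.permMatrix, PEquiv.toMatrix_toPEquiv_mul,
    PEquiv.mul_toMatrix_toPEquiv, Matrix.submatrix_submatrix]
  rw [show ⇑(σ⁻¹ : Equiv.Perm (Fin d)) ∘ id = ⇑σ⁻¹ from rfl, show id ∘ ⇑σ.symm = ⇑σ⁻¹ from rfl,
    Matrix.submatrix_diagonal _ _ (Equiv.injective _)]

theorem permMatrix_mem (σ : Equiv.Perm (Fin d)) :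
    σ.permMatrix ℝ ∈ Matrix.orthogonalGroup (Fin d) ℝ := by
  rw [Matrix.mem_orthogonalGroup_iff']
  have h1 : (σ.permMatrix ℝ)ᵀ = (σ⁻¹).permMatrix ℝ := by
    rw [Equiv.Perm.permMatrix, Equiv.Perm.permMatrix, ← PEquiv.toMatrix_symm,
      ← Equiv.toPEquiv_symm]
    rfl
  rw [h1, Equiv.Perm.permMatrix, Equiv.Perm.permMatrix, PEquiv.toMatrix_toPEquiv_mul]
  ext p q
  simp [Matrix.submatrix_apply, PEquiv.toMatrix_apply, Equiv.toPEquiv_apply,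
    Matrix.one_apply, Equiv.apply_eq_iff_eq_symm_apply]

variable {d : ℕ}

theorem og_entry_bound (U : Matrix (Fin d) (Fin d) ℝ)
    (hU : U ∈ Matrix.orthogonalGroup (Fin d) ℝ) (i j : Fin d) :
    U i j ∈ Set.Icc (-1:ℝ) 1 := by
  have h1 : Uᵀ * U = 1 := by
    have := (Matrix.mem_orthogonalGroup_iff' (Fin d) ℝ).mp hU
    exact this
  have hsum : ∑ k, U k j * U k j = 1 := by
    have := congrArg (fun M => M j j) h1
    simpa [Matrix.mul_apply, Matrix.transpose_apply, Matrix.one_apply] using this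
  have hle : U i j ^ 2 ≤ 1 := by
    rw [← hsum, sq]
    exact Finset.single_le_sum (f := fun k => U k j * U k j)
      (fun k _ => mul_self_nonneg _) (Finset.mem_univ i)
  exact Set.mem_Icc.mpr (abs_le.mp ((sq_le_one_iff_abs_le_one (U i j)).mp hle))

theorem og_isCompact :
    IsCompact ((Matrix.orthogonalGroup (Fin d) ℝ : Submonoid _) : Set (Matrix (Fin d) (Fin d) ℝ)) := by
  have hK : IsCompact (Set.pi Set.univ
      (fun _ : Fin d => Set.pi Set.univ fun _ : Fin d => Set.Icc (-1:ℝ) 1)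
        : Set (Matrix (Fin d) (Fin d) ℝ)) :=
    isCompact_univ_pi fun _ => isCompact_univ_pi fun _ => isCompact_Icc
  apply IsCompact.of_isClosed_subset hK
  · have : ((Matrix.orthogonalGroup (Fin d) ℝ : Submonoid _) : Set (Matrix (Fin d) (Fin d) ℝ))
        = (fun U : Matrix (Fin d) (Fin d) ℝ => U * star U) ⁻¹' {1} := by
      ext U
      simp only [Set.mem_preimage, Set.mem_singleton_iff, SetLike.mem_coe]
      exact Matrix.mem_orthogonalGroup_iff (Fin d) ℝ
    rw [this]
    exact IsClosed.preimage (continuous_id.matrix_mul continuous_star) isClosed_singleton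
  · intro U hU
    have hU' : U ∈ Matrix.orthogonalGroup (Fin d) ℝ := hU
    intro i _
    intro j _
    exact og_entry_bound U hU' i j

instance og_compactSpace : CompactSpace (Matrix.orthogonalGroup (Fin d) ℝ) :=
  isCompact_iff_compactSpace.mp og_isCompact

variable {d : ℕ}
theorem og_transpose_mul (U : Matrix.orthogonalGroup (Fin d) ℝ) :
    (U : Matrix (Fin d) (Fin d) ℝ)ᵀ * (U : Matrix (Fin d) (Fin d) ℝ) = 1 := by
  have := (Matrix.mem_orthogonalGroup_iff' (Fin d) ℝ).mp U.2
  exact this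

theorem og_mul_transpose (U : Matrix.orthogonalGroup (Fin d) ℝ) :
    (U : Matrix (Fin d) (Fin d) ℝ) * (U : Matrix (Fin d) (Fin d) ℝ)ᵀ = 1 := by
  have := (Matrix.mem_orthogonalGroup_iff (Fin d) ℝ).mp U.2
  exact this

theorem det_conj_og (U : Matrix.orthogonalGroup (Fin d) ℝ) (A B : Matrix (Fin d) (Fin d) ℝ) :
    (A + (U : Matrix (Fin d) (Fin d) ℝ)ᵀ * B * U).det
      = ((U : Matrix (Fin d) (Fin d) ℝ) * A * (U : Matrix (Fin d) (Fin d) ℝ)ᵀ + B).det := by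
  set V : Matrix (Fin d) (Fin d) ℝ := (U : Matrix (Fin d) (Fin d) ℝ)
  have h1 : Vᵀ * V = 1 := og_transpose_mul U
  have h2 : V * Vᵀ = 1 := og_mul_transpose U
  have key : Vᵀ * ((V * A * Vᵀ + B) * V) = A + Vᵀ * B * V := by
    rw [Matrix.add_mul, Matrix.mul_add]
    congr 1
    · calc Vᵀ * (V * A * Vᵀ * V) = (Vᵀ * V) * A * (Vᵀ * V) := by
            simp only [Matrix.mul_assoc]
        _ = A := by rw [h1, Matrix.one_mul, Matrix.mul_one]
    · rw [Matrix.mul_assoc]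
  have hdet : Vᵀ.det * V.det = 1 := by
    rw [← Matrix.det_mul, h1, Matrix.det_one]
  calc (A + Vᵀ * B * V).det = (Vᵀ * ((V * A * Vᵀ + B) * V)).det := by rw [key]
    _ = Vᵀ.det * ((V * A * Vᵀ + B).det * V.det) := by rw [Matrix.det_mul, Matrix.det_mul]
    _ = (Vᵀ.det * V.det) * (V * A * Vᵀ + B).det := by ring
    _ = (V * A * Vᵀ + B).det := by rw [hdet, one_mul]

theorem og_integrable (μ : Measure (Matrix.orthogonalGroup (Fin d) ℝ)) [IsFiniteMeasure μ]
    {f : Matrix.orthogonalGroup (Fin d) ℝ → ℝ} (hf : Continuous f) : Integrable f μ := by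
  haveI : IsFiniteMeasureOnCompacts μ := ⟨fun _ _ => measure_lt_top μ _⟩
  apply hf.integrable_of_hasCompactSupport
  exact IsCompact.of_isClosed_subset isCompact_univ (isClosed_tsupport f) (Set.subset_univ _)

theorem og_diag_const (U : Matrix.orthogonalGroup (Fin d) ℝ) (t : ℝ) :
    (U : Matrix (Fin d) (Fin d) ℝ)ᵀ * diagonal (fun _ : Fin d => t) * U
      = diagonal (fun _ : Fin d => t) := by
  have hd : diagonal (fun _ : Fin d => t) = t • (1 : Matrix (Fin d) (Fin d) ℝ) := by
    ext p q
    by_cases h : p = q <;> simp [h, Matrix.diagonal_apply, Matrix.one_apply]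
  rw [hd, Matrix.mul_smul, Matrix.smul_mul, Matrix.mul_one, og_transpose_mul]

end Mats



theorem stmt6 (d : ℕ) (A D : Matrix (Fin d) (Fin d) ℝ) (hD : D.IsDiag)
    (μ : Measure (Matrix.orthogonalGroup (Fin d) ℝ))
    (hμ : μ.IsHaarMeasure) (hμprob : IsProbabilityMeasure μ) :
    (1 / (d.factorial : ℝ)) *
        ∑ P : Equiv.Perm (Fin d), (A + (P.permMatrix ℝ)ᵀ * D * P.permMatrix ℝ).det
      = ∫ U : Matrix.orthogonalGroup (Fin d) ℝ,
          (A + (U : Matrix (Fin d) (Fin d) ℝ)ᵀ * D * (U : Matrix (Fin d) (Fin d) ℝ)).det ∂μ := by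
  classical
  haveI := hμ
  haveI := hμprob
  set c₀ : Fin d → ℝ := D.diag with hc₀
  have hDdiag : diagonal c₀ = D := hD.diagonal_diag
  set Fval : (Fin d → ℝ) → ℝ := fun c =>
    ∫ U : Matrix.orthogonalGroup (Fin d) ℝ,
      (A + (U : Matrix (Fin d) (Fin d) ℝ)ᵀ * diagonal c * U).det ∂μ with hFval
  set Gval : (Fin d → ℝ) → ℝ := fun c =>
    (1 / (d.factorial : ℝ)) * ∑ σ : Equiv.Perm (Fin d), (A + diagonal (c ∘ ⇑σ)).det with hGval
  have hupd : ∀ (c : Fin d → ℝ) (σ : Equiv.Perm (Fin d)) (i : Fin d) (t : ℝ),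
      Function.update c i t ∘ ⇑σ = Function.update (c ∘ ⇑σ) (σ⁻¹ i) t := by
    intro c σ i t
    funext j
    simp only [Function.comp_apply, Function.update_apply]
    have hiff : (σ j = i) ↔ (j = σ⁻¹ i) := by
      rw [show (σ⁻¹ : Equiv.Perm (Fin d)) = σ.symm from rfl]
      exact Equiv.apply_eq_iff_eq_symm_apply σ
    rw [if_congr hiff rfl rfl]
  have hGsym : ∀ (σ : Equiv.Perm (Fin d)) (x : Fin d → ℝ), Gval (x ∘ ⇑σ) = Gval x := by
    intro σ x
    simp only [hGval]
    congr 1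
    refine Fintype.sum_equiv (Equiv.mulLeft σ) _ _ fun τ => ?_
    congr 2
  have hFsym : ∀ (σ : Equiv.Perm (Fin d)) (x : Fin d → ℝ), Fval (x ∘ ⇑σ) = Fval x := by
    intro σ x
    have hPmem := permMatrix_mem (d := d) σ⁻¹
    set P : Matrix.orthogonalGroup (Fin d) ℝ := ⟨(σ⁻¹).permMatrix ℝ, hPmem⟩ with hP
    have hconj : ((P : Matrix (Fin d) (Fin d) ℝ))ᵀ * diagonal x * (P : Matrix (Fin d) (Fin d) ℝ)
        = diagonal (x ∘ ⇑σ) := by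
      have := perm_conj x σ⁻¹
      rwa [inv_inv] at this
    have hfun2 : ∀ U : Matrix.orthogonalGroup (Fin d) ℝ,
        (A + (U : Matrix (Fin d) (Fin d) ℝ)ᵀ * diagonal (x ∘ ⇑σ) * U).det
          = (A + ((P * U : Matrix.orthogonalGroup (Fin d) ℝ) : Matrix (Fin d) (Fin d) ℝ)ᵀ
              * diagonal x * ((P * U : Matrix.orthogonalGroup (Fin d) ℝ)
                : Matrix (Fin d) (Fin d) ℝ)).det := by
      intro U
      congr 1
      have hcoe : ((P * U : Matrix.orthogonalGroup (Fin d) ℝ) : Matrix (Fin d) (Fin d) ℝ)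
          = (P : Matrix (Fin d) (Fin d) ℝ) * (U : Matrix (Fin d) (Fin d) ℝ) := rfl
      rw [hcoe, Matrix.transpose_mul, ← hconj]
      simp only [Matrix.mul_assoc]
    simp only [hFval]
    rw [show (fun U : Matrix.orthogonalGroup (Fin d) ℝ =>
        (A + (U : Matrix (Fin d) (Fin d) ℝ)ᵀ * diagonal (x ∘ ⇑σ) * U).det)
      = fun U : Matrix.orthogonalGroup (Fin d) ℝ =>
        (fun V : Matrix.orthogonalGroup (Fin d) ℝ =>
          (A + (V : Matrix (Fin d) (Fin d) ℝ)ᵀ * diagonal x * V).det) (P * U)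
      from funext fun U => hfun2 U]
    exact integral_mul_left_eq_self (μ := μ)
      (fun V : Matrix.orthogonalGroup (Fin d) ℝ =>
        (A + (V : Matrix (Fin d) (Fin d) ℝ)ᵀ * diagonal x * V).det) P
  have hGaff : ∀ (c : Fin d → ℝ) (i : Fin d), ∃ a b : ℝ, ∀ t,
      Gval (Function.update c i t) = a + t * b := by
    intro c i
    refine ⟨(1 / (d.factorial : ℝ)) * ∑ σ : Equiv.Perm (Fin d),
        (A + diagonal (Function.update (c ∘ ⇑σ) (σ⁻¹ i) 0)).det,
      (1 / (d.factorial : ℝ)) * ∑ σ : Equiv.Perm (Fin d),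
        ((A + diagonal (Function.update (c ∘ ⇑σ) (σ⁻¹ i) 0)).updateRow (σ⁻¹ i)
          (Pi.single (σ⁻¹ i) 1)).det, fun t => ?_⟩
    simp only [hGval]
    rw [Finset.sum_congr rfl (fun σ _ => by rw [hupd c σ i t, det_diag_affine])]
    rw [Finset.sum_add_distrib, ← Finset.mul_sum]
    ring
  have hFaff : ∀ (c : Fin d → ℝ) (i : Fin d), ∃ a b : ℝ, ∀ t,
      Fval (Function.update c i t) = a + t * b := by
    intro c i
    set α : Matrix.orthogonalGroup (Fin d) ℝ → ℝ := fun U =>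
      ((U : Matrix (Fin d) (Fin d) ℝ) * A * (U : Matrix (Fin d) (Fin d) ℝ)ᵀ
        + diagonal (Function.update c i 0)).det with hα'
    set β : Matrix.orthogonalGroup (Fin d) ℝ → ℝ := fun U =>
      (((U : Matrix (Fin d) (Fin d) ℝ) * A * (U : Matrix (Fin d) (Fin d) ℝ)ᵀ
        + diagonal (Function.update c i 0)).updateRow i (Pi.single i 1)).det with hβ'
    have hc : Continuous (fun U : Matrix.orthogonalGroup (Fin d) ℝ =>
        (U : Matrix (Fin d) (Fin d) ℝ) * A * (U : Matrix (Fin d) (Fin d) ℝ)ᵀ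
          + diagonal (Function.update c i 0)) :=
      ((continuous_subtype_val.matrix_mul continuous_const).matrix_mul
        continuous_subtype_val.matrix_transpose).add continuous_const
    have hα : Continuous α := hc.matrix_det
    have hβ : Continuous β := (hc.matrix_updateRow i continuous_const).matrix_det
    refine ⟨∫ U, α U ∂μ, ∫ U, β U ∂μ, fun t => ?_⟩
    simp only [hFval]
    have hpt : ∀ U : Matrix.orthogonalGroup (Fin d) ℝ,
        (A + (U : Matrix (Fin d) (Fin d) ℝ)ᵀ * diagonal (Function.update c i t) * U).det
          = α U + t * β U := by
      intro U
      rw [det_conj_og, det_diag_affine]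
    rw [show (fun U : Matrix.orthogonalGroup (Fin d) ℝ =>
        (A + (U : Matrix (Fin d) (Fin d) ℝ)ᵀ * diagonal (Function.update c i t) * U).det)
      = fun U => α U + t * β U from funext hpt]
    rw [integral_add (og_integrable μ hα) ((og_integrable μ hβ).const_mul t),
      integral_const_mul]
  have hdiagz : ∀ t : ℝ, Gval (fun _ => t) - Fval (fun _ => t) = 0 := by
    intro t
    have hG : Gval (fun _ => t) = (A + diagonal (fun _ : Fin d => t)).det := by
      simp only [hGval]
      have hcomp : ∀ σ : Equiv.Perm (Fin d),
          ((fun _ : Fin d => t) ∘ ⇑σ) = fun _ : Fin d => t := fun σ => rfl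
      rw [Finset.sum_congr rfl fun σ _ => by rw [hcomp σ]]
      rw [Finset.sum_const, Finset.card_univ, Fintype.card_perm, Fintype.card_fin,
        nsmul_eq_mul, ← mul_assoc, one_div,
        inv_mul_cancel₀ (Nat.cast_ne_zero.mpr (Nat.factorial_ne_zero d)), one_mul]
    have hF : Fval (fun _ => t) = (A + diagonal (fun _ : Fin d => t)).det := by
      simp only [hFval]
      rw [show (fun U : Matrix.orthogonalGroup (Fin d) ℝ =>
          (A + (U : Matrix (Fin d) (Fin d) ℝ)ᵀ * diagonal (fun _ : Fin d => t) * U).det)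
        = fun _ : Matrix.orthogonalGroup (Fin d) ℝ =>
            (A + diagonal (fun _ : Fin d => t)).det from
        funext fun U => by rw [og_diag_const]]
      rw [integral_const]
      simp
    rw [hG, hF, sub_self]
  have hzero := symm_multiaffine_eq_zero (g := fun c => Gval c - Fval c)
    (fun σ x => by simp only [hGsym σ x, hFsym σ x])
    (fun x i => by
      obtain ⟨aG, bG, hG⟩ := hGaff x i
      obtain ⟨aF, bF, hF⟩ := hFaff x i
      exact ⟨aG - aF, bG - bF, fun t => by
        show Gval _ - Fval _ = _
        rw [hG t, hF t]; ring⟩)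
    hdiagz
  have hmain : Gval c₀ = Fval c₀ := sub_eq_zero.mp (hzero c₀)
  calc (1 / (d.factorial : ℝ)) *
        ∑ P : Equiv.Perm (Fin d), (A + (P.permMatrix ℝ)ᵀ * D * P.permMatrix ℝ).det
      = Gval c₀ := by
        simp only [hGval]
        congr 1
        refine Fintype.sum_equiv (Equiv.inv (Equiv.Perm (Fin d))) _ _ fun σ => ?_
        rw [← hDdiag, perm_conj]
        rfl
    _ = Fval c₀ := hmain
    _ = ∫ U : Matrix.orthogonalGroup (Fin d) ℝ,
          (A + (U : Matrix (Fin d) (Fin d) ℝ)ᵀ * D * (U : Matrix (Fin d) (Fin d) ℝ)).det ∂μ := by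
        simp only [hFval, hDdiag]
end

section
/- Let x = (x_1,...,x_ℓ), y = (y_1,...,y_m), z = (z_1,...,z_n) be disjoint tuples of variables and let p ∈ ℝ[x,y] and q ∈ ℝ[x,z] be real zero polynomials of degree at most 2 with p(x,0) = q(x,0). Then there exists a real zero polynomial r ∈ ℝ[x,y,z] of degree at most 2 such that r(x,y,0) = p and r(x,0,z) = q. -/
open MvPolynomial

set_option maxHeartbeats 1000000

lemma disc_le (A B C : ℝ) (h : ∀ t : ℝ, 0 ≤ A * t ^ 2 + 2 * B * t + C) :
    B ^ 2 ≤ A * C := by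
  have hC : 0 ≤ C := by simpa using h 0
  have hA : 0 ≤ A := by
    by_contra hA
    push_neg at hA
    set t : ℝ := max 1 ((2 * |B| + C + 1) / (-A)) with ht
    have ht1 : (1:ℝ) ≤ t := le_max_left _ _
    have ht2 : (2 * |B| + C + 1) / (-A) ≤ t := le_max_right _ _
    have hAt : A * t ≤ -(2 * |B| + C + 1) := by
      rw [div_le_iff₀ (by linarith)] at ht2
      nlinarith
    have hBt : 2 * B * t ≤ 2 * |B| * t := by
      have := le_abs_self B
      nlinarith
    have := h t
    nlinarith [abs_nonneg B, le_abs_self B]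
  rcases eq_or_lt_of_le hA with hA0 | hA0
  · have hB : B = 0 := by
      by_contra hB
      have := h (-(C + 1) / (2 * B))
      rw [← hA0] at this
      field_simp at this
      rw [le_div_iff₀ (by positivity)] at this
      nlinarith [lt_of_le_of_ne (sq_nonneg B) (Ne.symm (pow_ne_zero 2 hB))]
    nlinarith
  · have h1 := h (-B / A)
    have h2 : A * (-B / A) ^ 2 + 2 * B * (-B / A) + C = C - B^2 / A := by
      field_simp; ring
    rw [h2] at h1
    have h5 : (C - B^2/A) * A = C * A - B^2 := by field_simp
    nlinarith [mul_nonneg h1 hA0.le]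

lemma quadRR_iff (c0 Λ Θ : ℝ) (hc : c0 ≠ 0) :
    RealRooted (Polynomial.C c0 + Polynomial.C Λ * Polynomial.X
      + Polynomial.C Θ * Polynomial.X ^ 2) ↔ 4 * Θ * c0 ≤ Λ ^ 2 := by
  constructor
  · intro ⟨_, hroots⟩
    by_contra hdisc
    push_neg at hdisc
    have hΘ : Θ ≠ 0 := by
      intro h; rw [h] at hdisc; nlinarith [sq_nonneg Λ]
    set s : ℝ := Real.sqrt (4 * Θ * c0 - Λ ^ 2) with hs
    have hspos : 0 < s := Real.sqrt_pos.mpr (by linarith)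
    have hs2 : (s:ℝ) ^ 2 = 4 * Θ * c0 - Λ ^ 2 := Real.sq_sqrt (by linarith)
    set z : ℂ := (-(Λ:ℂ) + (s:ℂ) * Complex.I) / (2 * (Θ:ℂ)) with hz
    have hΘC : (Θ:ℂ) ≠ 0 := by exact_mod_cast hΘ
    have h1 : 2 * (Θ:ℂ) * z + (Λ:ℂ) = (s:ℂ) * Complex.I := by
      rw [hz]; field_simp; ring
    have hzval : Polynomial.aeval z (Polynomial.C c0 + Polynomial.C Λ * Polynomial.X
        + Polynomial.C Θ * Polynomial.X ^ 2) = 0 := by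
      simp only [map_add, map_mul, map_pow, Polynomial.aeval_X, Polynomial.aeval_C,
        Complex.coe_algebraMap]
      have h2 : ((s:ℂ) * Complex.I) ^ 2 = -((4:ℂ) * Θ * c0 - Λ ^ 2) := by
        have hcast : ((s:ℂ))^2 = ((4 * Θ * c0 - Λ ^ 2 : ℝ) : ℂ) := by exact_mod_cast hs2
        rw [mul_pow, hcast, Complex.I_sq]; push_cast; ring
      have h3 : (2 * (Θ:ℂ) * z + (Λ:ℂ)) ^ 2 = -((4:ℂ) * Θ * c0 - Λ ^ 2) := by rw [h1, h2]
      have key : (4:ℂ) * Θ * ((c0:ℂ) + Λ * z + Θ * z ^ 2) = 0 := by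
        linear_combination h3
      have h4 := mul_eq_zero.mp key
      rcases h4 with h4 | h4
      · exfalso; exact hΘC (by linear_combination h4 / 4)
      · exact h4
    have him := hroots z hzval
    have : s = 2 * Θ * z.im := by
      have := congrArg Complex.im h1
      simpa [Complex.add_im, Complex.mul_im] using this.symm
    rw [him] at this
    simp at this
    linarith
  · intro hdisc
    constructor
    · intro h0
      have : c0 = 0 := by
        have := congrArg (Polynomial.coeff · 0) h0
        simpa using this
      exact hc this
    · intro z hzval
      simp only [map_add, map_mul, map_pow, Polynomial.aeval_X, Polynomial.aeval_C,
        Complex.coe_algebraMap] at hzval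
      by_cases hΘ : Θ = 0
      · subst hΘ
        have hΛ : (Λ:ℂ) ≠ 0 := by
          intro h
          have hΛ0 : Λ = 0 := by exact_mod_cast h
          subst hΛ0
          simp at hzval
          exact hc (by exact_mod_cast hzval)
        have him := congrArg Complex.im hzval
        simp [Complex.add_im, Complex.mul_im] at him
        rcases him with h | h
        · exact absurd (by exact_mod_cast h : (Λ:ℂ) = 0) hΛ
        · exact h
      · have hΘC : (Θ:ℂ) ≠ 0 := by exact_mod_cast hΘ
        set w : ℂ := 2 * (Θ:ℂ) * z + (Λ:ℂ) with hw
        have hw2 : w ^ 2 = ((Λ^2 - 4 * Θ * c0 : ℝ) : ℂ) := by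
          push_cast
          rw [hw]
          linear_combination (4*(Θ:ℂ)) * hzval
        have him : w.re * w.im = 0 := by
          have := congrArg Complex.im hw2
          simp [pow_two, Complex.mul_im] at this
          linarith
        have hre : w.re ^ 2 - w.im ^ 2 = Λ^2 - 4 * Θ * c0 := by
          have := congrArg Complex.re hw2
          simpa [pow_two, Complex.mul_re] using this
        have hwim : w.im = 0 := by
          by_contra hwim
          have hwre : w.re = 0 := by
            rcases mul_eq_zero.mp him with h | h
            · exact h
            · exact absurd h hwim
          rw [hwre] at hre
          have h6 : 0 < w.im ^ 2 := lt_of_le_of_ne (sq_nonneg _) (Ne.symm (pow_ne_zero 2 hwim))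
          nlinarith
        have hzim : w.im = 2 * Θ * z.im := by
          rw [hw]; simp [Complex.add_im, Complex.mul_im]
        rw [hwim] at hzim
        have := hzim.symm
        rcases mul_eq_zero.mp this with h | h
        · norm_num at h; exact absurd h hΘ
        · exact h


section LineEval

set_option linter.unusedSectionVars false

variable {σ : Type*} [Fintype σ] [DecidableEq σ]

/-- degree weight of an exponent vector -/
def wsum (d : σ →₀ ℕ) : ℕ := d.sum fun _ n => n

lemma wsum_add (d e : σ →₀ ℕ) : wsum (d + e) = wsum d + wsum e := by
  classical
  exact Finsupp.sum_add_index' (fun _ => rfl) (fun _ _ _ => rfl)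

lemma wsum_single (i : σ) (n : ℕ) : wsum (Finsupp.single i n) = n := by
  simp [wsum, Finsupp.sum_single_index]

lemma wsum_eq_zero {d : σ →₀ ℕ} (h : wsum d = 0) : d = 0 := by
  ext i
  by_cases hi : i ∈ d.support
  · exfalso
    have h1 : d i ≤ wsum d := Finset.single_le_sum (fun _ _ => Nat.zero_le _) hi
    have h2 : d i ≠ 0 := Finsupp.mem_support_iff.mp hi
    omega
  · simpa using Finsupp.notMem_support_iff.mp hi

lemma wsum_split {d : σ →₀ ℕ} (h : wsum d ≠ 0) :
    ∃ i e, d = Finsupp.single i 1 + e ∧ wsum d = 1 + wsum e := by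
  have hsupp : d.support.Nonempty := by
    by_contra hs
    rw [Finset.not_nonempty_iff_eq_empty] at hs
    exact h (by simp [wsum, Finsupp.sum, hs])
  obtain ⟨i, hi⟩ := hsupp
  have h1 : 1 ≤ d i := Nat.one_le_iff_ne_zero.mpr (Finsupp.mem_support_iff.mp hi)
  have hle : Finsupp.single i 1 ≤ d := Finsupp.single_le_iff.mpr h1
  refine ⟨i, d - Finsupp.single i 1, ?_, ?_⟩
  · rw [add_tsub_cancel_of_le hle]
  · conv_lhs => rw [← add_tsub_cancel_of_le hle]
    rw [wsum_add, wsum_single]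

lemma wsum_eq_one {d : σ →₀ ℕ} (h : wsum d = 1) : ∃ i, d = Finsupp.single i 1 := by
  obtain ⟨i, e, hd, hw⟩ := wsum_split (d := d) (by omega)
  rw [h] at hw
  have : wsum e = 0 := by omega
  rw [wsum_eq_zero this] at hd
  exact ⟨i, by simpa using hd⟩

lemma wsum_eq_two {d : σ →₀ ℕ} (h : wsum d = 2) :
    ∃ i j, d = Finsupp.single i 1 + Finsupp.single j 1 := by
  obtain ⟨i, e, hd, hw⟩ := wsum_split (d := d) (by omega)
  rw [h] at hw
  have : wsum e = 1 := by omega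
  obtain ⟨j, hj⟩ := wsum_eq_one this
  exact ⟨i, j, by rw [hd, hj]⟩

lemma single_apply_ne {i j : σ} (h : i ≠ j) : (Finsupp.single i 1 : σ →₀ ℕ) j = 0 := by
  simp [Finsupp.single_apply, h]

lemma pair_eq {i j u v : σ}
    (h : Finsupp.single i 1 + Finsupp.single j 1
       = Finsupp.single u 1 + Finsupp.single v 1) :
    (i = u ∧ j = v) ∨ (i = v ∧ j = u) := by
  by_cases hiu : i = u
  · subst hiu
    left
    have := add_left_cancel h
    exact ⟨rfl, Finsupp.single_left_injective one_ne_zero this⟩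
  · right
    have hvi : v = i := by
      have := DFunLike.congr_fun h i
      simp only [Finsupp.add_apply, Finsupp.single_apply, if_pos rfl,
        if_neg (fun h' => hiu h'.symm : ¬ u = i)] at this
      by_contra hvi
      rw [if_neg hvi] at this
      split at this <;> simp_all
    subst hvi
    refine ⟨rfl, ?_⟩
    rw [add_comm (Finsupp.single u 1)] at h
    have := add_left_cancel h
    exact Finsupp.single_left_injective one_ne_zero this

noncomputable def lvec (p : MvPolynomial σ ℝ) : σ → ℝ :=
  fun i => coeff (Finsupp.single i 1) p

noncomputable def qmat (p : MvPolynomial σ ℝ) : Matrix σ σ ℝ :=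
  Matrix.of fun i j => coeff (Finsupp.single i 1 + Finsupp.single j 1) p
    * (if i = j then 1 else 1/2)

lemma qmat_symm (p : MvPolynomial σ ℝ) (i j : σ) : qmat p i j = qmat p j i := by
  simp only [qmat, Matrix.of_apply, add_comm (Finsupp.single i 1)]
  congr 1
  by_cases h : i = j <;> simp [h, eq_comm, Ne.symm]

noncomputable def lval (p : MvPolynomial σ ℝ) (a : σ → ℝ) : ℝ := ∑ i, lvec p i * a i

noncomputable def qval (p : MvPolynomial σ ℝ) (a : σ → ℝ) : ℝ :=
  ∑ i, ∑ j, qmat p i j * a i * a j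

lemma lineEval (p : MvPolynomial σ ℝ) (hd : p.totalDegree ≤ 2) (a : σ → ℝ) :
    aeval (fun i => Polynomial.C (a i) * Polynomial.X) p
      = Polynomial.C (coeff 0 p) + Polynomial.C (lval p a) * Polynomial.X
        + Polynomial.C (qval p a) * Polynomial.X ^ 2 := by
  have expand : aeval (fun i => Polynomial.C (a i) * Polynomial.X) p
      = ∑ d ∈ p.support, Polynomial.C (coeff d p * d.prod fun i n => a i ^ n)
          * Polynomial.X ^ (wsum d) := by
    conv_lhs => rw [p.as_sum]
    rw [map_sum]
    refine Finset.sum_congr rfl fun d _ => ?_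
    rw [aeval_monomial]
    have : (d.prod fun i n => (Polynomial.C (a i) * Polynomial.X) ^ n)
        = Polynomial.C (d.prod fun i n => a i ^ n) * Polynomial.X ^ (wsum d) := by
      simp only [Finsupp.prod, wsum, Finsupp.sum, mul_pow, ← Polynomial.C_pow]
      rw [Finset.prod_mul_distrib, ← map_prod, Finset.prod_pow_eq_pow_sum]
    rw [this]
    simp [Polynomial.algebraMap_eq, map_mul, mul_assoc]
  rw [expand]
  apply Polynomial.ext
  intro k
  rw [Polynomial.finset_sum_coeff]
  simp only [Polynomial.coeff_C_mul, Polynomial.coeff_X_pow, mul_ite, mul_one, mul_zero]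
  have hwle : ∀ d ∈ p.support, wsum d ≤ 2 := fun d hd' =>
    le_trans (Finset.le_sup hd') hd
  match k with
  | 0 =>
    rw [← Finset.sum_filter]
    have hfe : p.support.filter (fun d => (0:ℕ) = wsum d)
        = p.support.filter (fun d => d = 0) := by
      apply Finset.filter_congr
      intro d _
      constructor
      · intro h; exact wsum_eq_zero h.symm ▸ rfl
      · intro h; subst h; simp [wsum]
    rw [hfe, Finset.filter_eq']
    by_cases h0 : (0 : σ →₀ ℕ) ∈ p.support
    · rw [if_pos h0, Finset.sum_singleton]
      simp [Polynomial.coeff_add, Polynomial.coeff_C]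
    · rw [if_neg h0, Finset.sum_empty]
      have : coeff 0 p = 0 := MvPolynomial.notMem_support_iff.mp h0
      simp [Polynomial.coeff_add, Polynomial.coeff_C, this]
  | 1 =>
    rw [← Finset.sum_filter]
    have hsub : p.support.filter (fun d => (1:ℕ) = wsum d)
        ⊆ Finset.univ.image (fun i => Finsupp.single i 1) := by
      intro d hd'
      rw [Finset.mem_filter] at hd'
      obtain ⟨i, rfl⟩ := wsum_eq_one hd'.2.symm
      exact Finset.mem_image_of_mem _ (Finset.mem_univ i)
    rw [Finset.sum_subset hsub ?_]
    · rw [Finset.sum_image (fun i _ j _ h => Finsupp.single_left_injective one_ne_zero h)]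
      have : ∀ i : σ, coeff (Finsupp.single i 1) p
          * (Finsupp.single i 1).prod (fun i n => a i ^ n) = lvec p i * a i := by
        intro i
        rw [Finsupp.prod_single_index (by simp)]
        simp [lvec]
      rw [Finset.sum_congr rfl fun i _ => this i]
      simp [Polynomial.coeff_add, Polynomial.coeff_C, lval]
    · intro d hd' hnd
      rw [Finset.mem_image] at hd'
      obtain ⟨i, _, rfl⟩ := hd'
      have : Finsupp.single i 1 ∉ p.support := by
        intro hs
        exact hnd (Finset.mem_filter.mpr ⟨hs, (wsum_single i 1).symm⟩)
      rw [MvPolynomial.notMem_support_iff.mp this]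
      simp
  | 2 =>
    rw [← Finset.sum_filter]
    set Tset : Finset (σ →₀ ℕ) := (Finset.univ ×ˢ Finset.univ).image
      (fun ij : σ × σ => Finsupp.single ij.1 1 + Finsupp.single ij.2 1) with hT
    have hsub : p.support.filter (fun d => (2:ℕ) = wsum d) ⊆ Tset := by
      intro d hd'
      rw [Finset.mem_filter] at hd'
      obtain ⟨i, j, rfl⟩ := wsum_eq_two hd'.2.symm
      exact Finset.mem_image.mpr ⟨(i, j), by simp, rfl⟩
    rw [Finset.sum_subset hsub ?_]
    · -- sum over Tset equals qval
      have hmaps : ∀ ij ∈ Finset.univ ×ˢ Finset.univ,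
          (fun ij : σ × σ => Finsupp.single ij.1 1 + Finsupp.single ij.2 1) ij ∈ Tset :=
        fun ij hij => Finset.mem_image_of_mem _ hij
      have hfib := Finset.sum_fiberwise_of_maps_to hmaps
        (fun ij : σ × σ => qmat p ij.1 ij.2 * a ij.1 * a ij.2)
      have hq : qval p a = ∑ ij ∈ Finset.univ ×ˢ Finset.univ,
          qmat p ij.1 ij.2 * a ij.1 * a ij.2 := by
        rw [Finset.sum_product]
        rfl
      have hrhs : (Polynomial.C (coeff 0 p) + Polynomial.C (lval p a) * Polynomial.X
          + Polynomial.C (qval p a) * Polynomial.X ^ 2).coeff 2 = qval p a := by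
        simp [Polynomial.coeff_add, Polynomial.coeff_C]
      rw [hrhs, hq, ← hfib]
      refine Finset.sum_congr rfl fun d hd2 => ?_
      -- fiber sums
      rw [hT, Finset.mem_image] at hd2
      obtain ⟨⟨u, v⟩, _, rfl⟩ := hd2
      by_cases huv : u = v
      · subst huv
        have hfe : (Finset.univ ×ˢ Finset.univ).filter
            (fun ij : σ × σ => Finsupp.single ij.1 1 + Finsupp.single ij.2 1
              = Finsupp.single u 1 + Finsupp.single u 1) = {(u, u)} := by
          apply Finset.ext
          rintro ⟨i, j⟩
          simp only [Finset.mem_filter, Finset.mem_singleton, Prod.mk.injEq]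
          constructor
          · rintro ⟨-, h⟩
            rcases pair_eq h with ⟨h1, h2⟩ | ⟨h1, h2⟩ <;> exact ⟨h1, h2⟩
          · rintro ⟨rfl, rfl⟩
            exact ⟨by simp, rfl⟩
        rw [hfe, Finset.sum_singleton]
        have hd2 : Finsupp.single u 1 + Finsupp.single u 1 = Finsupp.single u 2 := by
          rw [← Finsupp.single_add]
        rw [hd2, Finsupp.prod_single_index (by simp)]
        simp [qmat, hd2]
        ring
      · have hfe : (Finset.univ ×ˢ Finset.univ).filter
            (fun ij : σ × σ => Finsupp.single ij.1 1 + Finsupp.single ij.2 1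
              = Finsupp.single u 1 + Finsupp.single v 1) = {(u, v), (v, u)} := by
          apply Finset.ext
          rintro ⟨i, j⟩
          simp only [Finset.mem_filter, Finset.mem_insert, Finset.mem_singleton,
            Prod.mk.injEq]
          constructor
          · rintro ⟨-, h⟩
            rcases pair_eq h with ⟨h1, h2⟩ | ⟨h1, h2⟩
            · exact Or.inl ⟨h1, h2⟩
            · exact Or.inr ⟨h1, h2⟩
          · rintro (⟨rfl, rfl⟩ | ⟨rfl, rfl⟩)
            · exact ⟨by simp, rfl⟩
            · exact ⟨by simp, by rw [add_comm]⟩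
        rw [hfe, Finset.sum_pair (by simp [Prod.ext_iff]; tauto)]
        rw [Finsupp.prod_add_index' (by simp) (fun _ b1 b2 => pow_add _ b1 b2),
          Finsupp.prod_single_index (by simp), Finsupp.prod_single_index (by simp)]
        simp only [qmat, Matrix.of_apply, if_neg huv, if_neg (Ne.symm huv),
          add_comm (Finsupp.single v 1)]
        ring
    · intro d hd' hnd
      rw [hT, Finset.mem_image] at hd'
      obtain ⟨ij, _, rfl⟩ := hd'
      have hw : wsum (Finsupp.single ij.1 1 + Finsupp.single ij.2 1) = 2 := by
        rw [wsum_add, wsum_single, wsum_single]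
      have : Finsupp.single ij.1 1 + Finsupp.single ij.2 1 ∉ p.support := by
        intro hs
        exact hnd (Finset.mem_filter.mpr ⟨hs, hw.symm⟩)
      rw [MvPolynomial.notMem_support_iff.mp this]
      simp
  | (k+3) =>
    have : ∀ d ∈ p.support, ¬ (k + 3 = wsum d) := by
      intro d hd' h
      have := hwle d hd'
      omega
    rw [Finset.sum_congr rfl fun d hd' => if_neg (this d hd')]
    simp [Polynomial.coeff_add, Polynomial.coeff_C]

end LineEval

open Matrix RealInnerProductSpace
set_option linter.unusedSectionVars false
set_option maxHeartbeats 1000000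


section LinAlg

variable {ι κ τ : Type*} [Fintype ι] [Fintype κ] [Fintype τ] [DecidableEq ι]

lemma dot_mulVec_comm (P : Matrix ι ι ℝ) (h : ∀ i j, P i j = P j i) (x y : ι → ℝ) :
    x ⬝ᵥ P.mulVec y = y ⬝ᵥ P.mulVec x := by
  simp only [dotProduct, Matrix.mulVec, Finset.mul_sum]
  rw [Finset.sum_comm]
  refine Finset.sum_congr rfl fun i _ => Finset.sum_congr rfl fun j _ => ?_
  rw [h j i]; ring

lemma solv (Cm : Matrix ι ι ℝ) (hsym : ∀ i j, Cm i j = Cm j i) (v : ι → ℝ)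
    (hv : ∀ x : ι → ℝ, Cm.mulVec x = 0 → v ⬝ᵥ x = 0) : ∃ u, Cm.mulVec u = v := by
  let f : EuclideanSpace ℝ ι →ₗ[ℝ] EuclideanSpace ℝ ι := Matrix.toEuclideanLin Cm
  have hf : ∀ x : EuclideanSpace ℝ ι, f x = Cm.mulVec x := by
    intro x
    rfl
  have hinner : ∀ x y : EuclideanSpace ℝ ι, (inner ℝ x y : ℝ) = ∑ i, x i * y i := by
    intro x y
    simp [PiLp.inner_apply, RCLike.inner_apply, mul_comm]
  have hadj : ∀ x y : EuclideanSpace ℝ ι, (inner ℝ (f x) y : ℝ) = inner ℝ x (f y) := by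
    intro x y
    rw [hinner, hinner]
    have key : ∀ x y : ι → ℝ, (∑ i, (Cm.mulVec x) i * y i) = ∑ i, x i * (Cm.mulVec y) i := by
      intro x y
      simp only [Matrix.mulVec, dotProduct, Finset.sum_mul, Finset.mul_sum]
      rw [Finset.sum_comm]
      exact Finset.sum_congr rfl fun i _ => Finset.sum_congr rfl fun j _ => by
        rw [hsym j i]; ring
    have := key x y
    simpa [hf] using this
  have horth : (LinearMap.range f)ᗮ = LinearMap.ker f := by
    ext y
    rw [Submodule.mem_orthogonal, LinearMap.mem_ker]
    constructor
    · intro h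
      have h2 : ∀ x, (inner ℝ x (f y) : ℝ) = 0 := fun x => by
        rw [← hadj]; exact h (f x) ⟨x, rfl⟩
      have := h2 (f y)
      rwa [inner_self_eq_zero] at this
    · intro h u hu
      obtain ⟨x, rfl⟩ := hu
      rw [hadj, h, inner_zero_right]
  have hrange : LinearMap.range f = (LinearMap.ker f)ᗮ := by
    conv_lhs => rw [← Submodule.orthogonal_orthogonal (LinearMap.range f)]
    rw [horth]
  set v' : EuclideanSpace ℝ ι := (WithLp.equiv 2 (ι → ℝ)).symm v with hv'
  have hvv : ∀ i, v' i = v i := fun i => rfl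
  have hvmem : v' ∈ (LinearMap.ker f)ᗮ := by
    rw [Submodule.mem_orthogonal]
    intro x hx
    rw [LinearMap.mem_ker] at hx
    have hx' : Cm.mulVec x = 0 := by rw [← hf, hx, WithLp.ofLp_zero]
    rw [hinner]
    have := hv x hx'
    simp only [dotProduct] at this
    rw [Finset.sum_congr rfl fun i _ => by rw [hvv i]]
    rw [← this]
    exact Finset.sum_congr rfl fun i _ => mul_comm _ _
  rw [← hrange] at hvmem
  obtain ⟨u, hu⟩ := hvmem
  refine ⟨u, ?_⟩
  rw [← hf u, hu]
  funext i
  exact hvv i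

lemma cross_swap (M : Matrix (ι ⊕ κ) (ι ⊕ κ) ℝ) (hMs : ∀ s t, M s t = M t s)
    (x : ι → ℝ) (b : κ → ℝ) :
    b ⬝ᵥ (M.submatrix Sum.inr Sum.inl).mulVec x
      = x ⬝ᵥ (M.submatrix Sum.inl Sum.inr).mulVec b := by
  simp only [dotProduct, Matrix.mulVec, Matrix.submatrix_apply, Finset.mul_sum]
  rw [Finset.sum_comm]
  refine Finset.sum_congr rfl fun i _ => Finset.sum_congr rfl fun j _ => ?_
  rw [hMs (Sum.inr j) (Sum.inl i)]; ring

lemma dot_split (M : Matrix (ι ⊕ κ) (ι ⊕ κ) ℝ) (a a' : ι → ℝ) (b b' : κ → ℝ) :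
    Sum.elim a b ⬝ᵥ M.mulVec (Sum.elim a' b')
      = a ⬝ᵥ (M.submatrix Sum.inl Sum.inl).mulVec a'
        + a ⬝ᵥ (M.submatrix Sum.inl Sum.inr).mulVec b'
        + b ⬝ᵥ (M.submatrix Sum.inr Sum.inl).mulVec a'
        + b ⬝ᵥ (M.submatrix Sum.inr Sum.inr).mulVec b' := by
  simp only [dotProduct, Matrix.mulVec, Matrix.submatrix_apply,
    Fintype.sum_sum_type, Sum.elim_inl, Sum.elim_inr, mul_add, Finset.sum_add_distrib]
  ring

lemma core (M : Matrix (ι ⊕ κ) (ι ⊕ κ) ℝ) (N : Matrix (ι ⊕ τ) (ι ⊕ τ) ℝ)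
    (hMs : ∀ s t, M s t = M t s) (hNs : ∀ s t, N s t = N t s)
    (hM : ∀ w, 0 ≤ w ⬝ᵥ M.mulVec w) (hN : ∀ w, 0 ≤ w ⬝ᵥ N.mulVec w)
    (hagree : ∀ a : ι → ℝ, Sum.elim a 0 ⬝ᵥ M.mulVec (Sum.elim a 0)
        = Sum.elim a 0 ⬝ᵥ N.mulVec (Sum.elim a 0)) :
    ∃ H : Matrix κ τ ℝ, ∀ (a : ι → ℝ) (b : κ → ℝ) (c : τ → ℝ),
      0 ≤ Sum.elim a b ⬝ᵥ M.mulVec (Sum.elim a b)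
        + Sum.elim a c ⬝ᵥ N.mulVec (Sum.elim a c)
        - Sum.elim a 0 ⬝ᵥ M.mulVec (Sum.elim a 0)
        + 2 * (b ⬝ᵥ H.mulVec c) := by
  classical
  set Cm := M.submatrix Sum.inl Sum.inl with hCm
  set Fm := M.submatrix Sum.inl Sum.inr with hFm
  set Am := M.submatrix Sum.inr Sum.inr with hAm
  set Cn := N.submatrix Sum.inl Sum.inl with hCn
  set Gm := N.submatrix Sum.inl Sum.inr with hGm
  set Dm := N.submatrix Sum.inr Sum.inr with hDm
  have hCsym : ∀ i j, Cm i j = Cm j i := fun i j => hMs _ _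
  have hCnsym : ∀ i j, Cn i j = Cn j i := fun i j => hNs _ _
  -- simplified values
  have hMval : ∀ (a : ι → ℝ) (b : κ → ℝ), Sum.elim a b ⬝ᵥ M.mulVec (Sum.elim a b)
      = a ⬝ᵥ Cm.mulVec a + 2 * (a ⬝ᵥ Fm.mulVec b) + b ⬝ᵥ Am.mulVec b := by
    intro a b
    rw [dot_split, cross_swap M hMs]
    ring
  have hNval : ∀ (a : ι → ℝ) (c : τ → ℝ), Sum.elim a c ⬝ᵥ N.mulVec (Sum.elim a c)
      = a ⬝ᵥ Cn.mulVec a + 2 * (a ⬝ᵥ Gm.mulVec c) + c ⬝ᵥ Dm.mulVec c := by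
    intro a c
    rw [dot_split, cross_swap N hNs]
    ring
  have hMval0 : ∀ a : ι → ℝ, Sum.elim a (0 : κ → ℝ) ⬝ᵥ M.mulVec (Sum.elim a 0)
      = a ⬝ᵥ Cm.mulVec a := by
    intro a
    rw [hMval]
    simp
  have hNval0 : ∀ a : ι → ℝ, Sum.elim a (0 : τ → ℝ) ⬝ᵥ N.mulVec (Sum.elim a 0)
      = a ⬝ᵥ Cn.mulVec a := by
    intro a
    rw [hNval]
    simp
  have hCeq : Cn = Cm := by
    have hval : ∀ a, a ⬝ᵥ Cn.mulVec a = a ⬝ᵥ Cm.mulVec a := by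
      intro a
      rw [← hMval0, ← hNval0, hagree]
    have hbil : ∀ x y, x ⬝ᵥ Cn.mulVec y = x ⬝ᵥ Cm.mulVec y := by
      intro x y
      have h1 := hval (x + y)
      have h2 := hval x
      have h3 := hval y
      simp only [Matrix.mulVec_add, add_dotProduct, dotProduct_add] at h1
      rw [dot_mulVec_comm Cn hCnsym y x, dot_mulVec_comm Cm hCsym y x] at h1
      linarith
    ext i j
    have := hbil (Pi.single i 1) (Pi.single j 1)
    simpa [Matrix.mulVec_single, dotProduct_single] using this
    -- gives entry equality
  have hCpsd : ∀ a : ι → ℝ, 0 ≤ a ⬝ᵥ Cm.mulVec a := fun a => by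
    rw [← hMval0]; exact hM _
  have hApsd : ∀ b : κ → ℝ, 0 ≤ b ⬝ᵥ Am.mulVec b := fun b => by
    have := hM (Sum.elim 0 b)
    rw [hMval] at this
    simpa using this
  have hDpsd : ∀ c : τ → ℝ, 0 ≤ c ⬝ᵥ Dm.mulVec c := fun c => by
    have := hN (Sum.elim 0 c)
    rw [hNval] at this
    simpa using this
  -- discriminant bounds
  have hFbound : ∀ (x : ι → ℝ) (b : κ → ℝ),
      (x ⬝ᵥ Fm.mulVec b) ^ 2 ≤ (x ⬝ᵥ Cm.mulVec x) * (b ⬝ᵥ Am.mulVec b) := by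
    intro x b
    apply disc_le
    intro t
    have := hM (Sum.elim (t • x) b)
    rw [hMval] at this
    rw [smul_dotProduct, Matrix.mulVec_smul, dotProduct_smul,
      smul_dotProduct] at this
    simp only [smul_eq_mul] at this
    nlinarith [this]
  have hGbound : ∀ (x : ι → ℝ) (c : τ → ℝ),
      (x ⬝ᵥ Gm.mulVec c) ^ 2 ≤ (x ⬝ᵥ Cm.mulVec x) * (c ⬝ᵥ Dm.mulVec c) := by
    intro x c
    apply disc_le
    intro t
    have := hN (Sum.elim (t • x) c)
    rw [hNval, hCeq] at this
    rw [smul_dotProduct, Matrix.mulVec_smul, dotProduct_smul,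
      smul_dotProduct] at this
    simp only [smul_eq_mul] at this
    nlinarith [this]
  -- solve for Sm, S'm
  have hsolF : ∀ j : κ, ∃ u, Cm.mulVec u = fun i => Fm i j := by
    intro j
    apply solv Cm hCsym
    intro x hx
    have hx0 : x ⬝ᵥ Cm.mulVec x = 0 := by rw [hx]; simp
    have hb := hFbound x (Pi.single j 1)
    rw [hx0] at hb
    have h0 : x ⬝ᵥ Fm.mulVec (Pi.single j 1) = 0 := by nlinarith [sq_nonneg (x ⬝ᵥ Fm.mulVec (Pi.single j 1))]
    have : (fun i => Fm i j) ⬝ᵥ x = x ⬝ᵥ Fm.mulVec (Pi.single j 1) := by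
      simp [Matrix.mulVec_single, dotProduct, mul_comm]
    rw [this, h0]
  have hsolG : ∀ k : τ, ∃ u, Cm.mulVec u = fun i => Gm i k := by
    intro k
    apply solv Cm hCsym
    intro x hx
    have hx0 : x ⬝ᵥ Cm.mulVec x = 0 := by rw [hx]; simp
    have hb := hGbound x (Pi.single k 1)
    rw [hx0] at hb
    have h0 : x ⬝ᵥ Gm.mulVec (Pi.single k 1) = 0 := by nlinarith [sq_nonneg (x ⬝ᵥ Gm.mulVec (Pi.single k 1))]
    have : (fun i => Gm i k) ⬝ᵥ x = x ⬝ᵥ Gm.mulVec (Pi.single k 1) := by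
      simp [Matrix.mulVec_single, dotProduct, mul_comm]
    rw [this, h0]
  set Sm : Matrix ι κ ℝ := Matrix.of (fun i j => (hsolF j).choose i) with hSm
  set Sn : Matrix ι τ ℝ := Matrix.of (fun i k => (hsolG k).choose i) with hSn
  have hCS : Cm * Sm = Fm := by
    ext i j
    have := congrFun (hsolF j).choose_spec i
    simpa [Matrix.mul_apply, Matrix.mulVec, dotProduct, hSm] using this
  have hCS' : Cm * Sn = Gm := by
    ext i k
    have := congrFun (hsolG k).choose_spec i
    simpa [Matrix.mul_apply, Matrix.mulVec, dotProduct, hSn] using this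
  refine ⟨Smᵀ * (Cm * Sn), fun a b c => ?_⟩
  set Tb := Sm.mulVec b with hTb
  set Sc := Sn.mulVec c with hSc
  have hH : b ⬝ᵥ (Smᵀ * (Cm * Sn)).mulVec c = Tb ⬝ᵥ Cm.mulVec Sc := by
    rw [← Matrix.mulVec_mulVec, Matrix.dotProduct_mulVec b Smᵀ,
      Matrix.vecMul_transpose, ← Matrix.mulVec_mulVec]
  have key1 : Cm.mulVec Tb = Fm.mulVec b := by
    rw [hTb, Matrix.mulVec_mulVec, hCS]
  have key2 : Cm.mulVec Sc = Gm.mulVec c := by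
    rw [hSc, Matrix.mulVec_mulVec, hCS']
  -- θ bounds
  have hθb : Tb ⬝ᵥ Cm.mulVec Tb ≤ b ⬝ᵥ Am.mulVec b := by
    have hθ := hFbound Tb b
    rw [← key1] at hθ
    nlinarith [hCpsd Tb, hApsd b, hθ]
  have hθc : Sc ⬝ᵥ Cm.mulVec Sc ≤ c ⬝ᵥ Dm.mulVec c := by
    have hθ := hGbound Sc c
    rw [← key2] at hθ
    nlinarith [hCpsd Sc, hDpsd c, hθ]
  rw [hMval, hNval, hMval0, hCeq, hH]
  have hu := hCpsd (a + Tb + Sc)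
  simp only [Matrix.mulVec_add, add_dotProduct, dotProduct_add] at hu
  rw [dot_mulVec_comm Cm hCsym Tb a, dot_mulVec_comm Cm hCsym Sc a,
    dot_mulVec_comm Cm hCsym Sc Tb] at hu
  have e1 : a ⬝ᵥ Cm.mulVec Tb = a ⬝ᵥ Fm.mulVec b := by rw [key1]
  have e2 : a ⬝ᵥ Cm.mulVec Sc = a ⬝ᵥ Gm.mulVec c := by rw [key2]
  rw [e1, e2] at hu
  linarith [hθb, hθc, hu]

end LinAlg


section Helpers

lemma aeval_aeval_mv {σ τ : Type*} {A : Type*} [CommSemiring A] [Algebra ℝ A]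
    (f : σ → MvPolynomial τ ℝ) (g : τ → A) (p : MvPolynomial σ ℝ) :
    aeval g (aeval f p) = aeval (fun i => aeval g (f i)) p :=
  AlgHom.congr_fun (comp_aeval f (aeval g)) p

lemma rename_aeval_mv {σ τ υ : Type*} (f : σ → MvPolynomial τ ℝ) (g : τ → υ)
    (p : MvPolynomial σ ℝ) :
    rename g (aeval f p) = aeval (fun i => rename g (f i)) p :=
  AlgHom.congr_fun (comp_aeval f (rename g)) p

lemma coeffs_eq {c1 l1 q1 c2 l2 q2 : ℝ}
    (h : Polynomial.C c1 + Polynomial.C l1 * Polynomial.X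
        + Polynomial.C q1 * Polynomial.X ^ 2
      = Polynomial.C c2 + Polynomial.C l2 * Polynomial.X
        + Polynomial.C q2 * Polynomial.X ^ 2) :
    c1 = c2 ∧ l1 = l2 ∧ q1 = q2 := by
  refine ⟨?_, ?_, ?_⟩
  · have := congrArg (Polynomial.coeff · 0) h
    simpa [Polynomial.coeff_add, Polynomial.coeff_C] using this
  · have := congrArg (Polynomial.coeff · 1) h
    simpa [Polynomial.coeff_add, Polynomial.coeff_C] using this
  · have := congrArg (Polynomial.coeff · 2) h
    simpa [Polynomial.coeff_add, Polynomial.coeff_C] using this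

lemma totalDegree_aeval_le_mv {σ τ : Type*} (f : σ → MvPolynomial τ ℝ)
    (hf : ∀ i, (f i).totalDegree ≤ 1) (p : MvPolynomial σ ℝ) :
    (aeval f p).totalDegree ≤ p.totalDegree := by
  conv_lhs => rw [p.as_sum]
  rw [map_sum]
  refine le_trans (totalDegree_finset_sum _ _) ?_
  refine Finset.sup_le fun d hd => ?_
  rw [aeval_monomial]
  refine le_trans (totalDegree_mul _ _) ?_
  have h1 : ((algebraMap ℝ (MvPolynomial τ ℝ)) (coeff d p)).totalDegree = 0 :=
    totalDegree_C _
  rw [h1, zero_add]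
  refine le_trans (totalDegree_finset_prod _ _) ?_
  have h2 : ∀ i ∈ d.support, ((f i) ^ (d i)).totalDegree ≤ d i := by
    intro i _
    refine le_trans (totalDegree_pow _ _) ?_
    calc d i * (f i).totalDegree ≤ d i * 1 := Nat.mul_le_mul_left _ (hf i)
    _ = d i := by omega
  refine le_trans (Finset.sum_le_sum h2) ?_
  exact Finset.le_sup (f := fun d => d.sum fun _ e => e) hd

lemma vecMulVec_val {σ : Type*} [Fintype σ] (l w : σ → ℝ) :
    w ⬝ᵥ (Matrix.vecMulVec l l).mulVec w = (∑ i, l i * w i) ^ 2 := by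
  have h1 : (Matrix.vecMulVec l l).mulVec w = fun i => l i * (∑ j, l j * w j) := by
    funext i
    simp [Matrix.vecMulVec, Matrix.mulVec, dotProduct, Finset.mul_sum, mul_assoc]
  rw [h1]
  simp only [dotProduct]
  have h2 : ∀ x, w x * (l x * (∑ j, l j * w j))
      = (l x * w x) * (∑ j, l j * w j) := fun x => by ring
  rw [Finset.sum_congr rfl fun x _ => h2 x, ← Finset.sum_mul, sq]

end Helpers

section MoreHelpers

lemma Mform_val {σ : Type*} [Fintype σ] (l : σ → ℝ) (Q : Matrix σ σ ℝ) (c : ℝ)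
    (w : σ → ℝ) :
    w ⬝ᵥ (Matrix.vecMulVec l l - (4*c) • Q).mulVec w
      = (∑ i, l i * w i) ^ 2 - 4 * (∑ i, ∑ j, Q i j * w i * w j) * c := by
  rw [Matrix.sub_mulVec, dotProduct_sub, vecMulVec_val]
  have hQv : w ⬝ᵥ ((4*c) • Q).mulVec w = (4*c) * (∑ i, ∑ j, Q i j * w i * w j) := by
    rw [Matrix.smul_mulVec, dotProduct_smul]
    simp only [smul_eq_mul]
    congr 1
    simp only [dotProduct, Matrix.mulVec, Finset.mul_sum]
    exact Finset.sum_congr rfl fun i _ => Finset.sum_congr rfl fun j _ => by ring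
  rw [hQv]; ring

lemma lval_elim {ι κ : Type*} [Fintype ι] [Fintype κ]
    (l : ι ⊕ κ → ℝ) (a : ι → ℝ) (b : κ → ℝ) :
    (∑ s, l s * Sum.elim a b s)
      = ∑ i, l (Sum.inl i) * a i + ∑ j, l (Sum.inr j) * b j := by
  rw [Fintype.sum_sum_type]; simp

end MoreHelpers

/-- Real zero amalgamation for quadratic polynomials: `p` has variables `(x, y)`
(indexed by `Fin ℓ ⊕ Fin m`), `q` has variables `(x, z)` (indexed by
`Fin ℓ ⊕ Fin n`) and the amalgam `r` has variables `(x, y, z)` (indexed by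
`Fin ℓ ⊕ (Fin m ⊕ Fin n)`). -/
theorem stmt12 (ℓ m n : ℕ)
    (p : MvPolynomial (Fin ℓ ⊕ Fin m) ℝ) (q : MvPolynomial (Fin ℓ ⊕ Fin n) ℝ)
    (hp : IsRealZero p) (hq : IsRealZero q)
    (hdp : p.totalDegree ≤ 2) (hdq : q.totalDegree ≤ 2)
    (hcompat : aeval (Sum.elim (fun i : Fin ℓ => (X i : MvPolynomial (Fin ℓ) ℝ)) fun _ => 0) p
      = aeval (Sum.elim (fun i : Fin ℓ => (X i : MvPolynomial (Fin ℓ) ℝ)) fun _ => 0) q) :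
    ∃ r : MvPolynomial (Fin ℓ ⊕ (Fin m ⊕ Fin n)) ℝ, IsRealZero r ∧
      r.totalDegree ≤ 2 ∧
      aeval (Sum.elim (fun i : Fin ℓ => (X (Sum.inl i) : MvPolynomial (Fin ℓ ⊕ Fin m) ℝ))
        (Sum.elim (fun j : Fin m => X (Sum.inr j)) fun _ => 0)) r = p ∧
      aeval (Sum.elim (fun i : Fin ℓ => (X (Sum.inl i) : MvPolynomial (Fin ℓ ⊕ Fin n) ℝ))
        (Sum.elim (fun _ : Fin m => 0) fun k : Fin n => X (Sum.inr k))) r = q := by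
  classical
  have hline0 : ∀ a : Fin ℓ → ℝ,
      aeval (fun s => Polynomial.C (Sum.elim a (0 : Fin m → ℝ) s) * Polynomial.X) p
        = aeval (fun s => Polynomial.C (Sum.elim a (0 : Fin n → ℝ) s) * Polynomial.X) q := by
    intro a
    have h := congrArg (aeval (fun i : Fin ℓ => Polynomial.C (a i) * Polynomial.X)) hcompat
    rw [aeval_aeval_mv, aeval_aeval_mv] at h
    have e1 : (fun s : Fin ℓ ⊕ Fin m =>
        aeval (fun i : Fin ℓ => Polynomial.C (a i) * Polynomial.X)
          (Sum.elim (fun i => (X i : MvPolynomial (Fin ℓ) ℝ)) (fun _ => 0) s))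
        = fun s => Polynomial.C (Sum.elim a (0 : Fin m → ℝ) s) * Polynomial.X := by
      funext s; cases s <;> simp
    have e2 : (fun s : Fin ℓ ⊕ Fin n =>
        aeval (fun i : Fin ℓ => Polynomial.C (a i) * Polynomial.X)
          (Sum.elim (fun i => (X i : MvPolynomial (Fin ℓ) ℝ)) (fun _ => 0) s))
        = fun s => Polynomial.C (Sum.elim a (0 : Fin n → ℝ) s) * Polynomial.X := by
      funext s; cases s <;> simp
    rw [e1, e2] at h
    exact h
  set c0 := coeff 0 p with hc0def
  have hcoeffs : ∀ a : Fin ℓ → ℝ, coeff 0 p = coeff 0 q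
      ∧ lval p (Sum.elim a 0) = lval q (Sum.elim a 0)
      ∧ qval p (Sum.elim a 0) = qval q (Sum.elim a 0) := by
    intro a
    have h := hline0 a
    rw [lineEval p hdp, lineEval q hdq] at h
    exact coeffs_eq h
  have hc0q : coeff 0 q = c0 := ((hcoeffs 0).1).symm
  have hc0 : c0 ≠ 0 := by
    have h := (hp 0).1
    rw [lineEval p hdp 0] at h
    intro hc
    apply h
    have hl : lval p 0 = 0 := by simp [lval]
    have hqv : qval p 0 = 0 := by simp [qval]
    rw [hl, hqv, ← hc0def, hc]
    simp
  -- PSD matrices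
  set Mp : Matrix (Fin ℓ ⊕ Fin m) (Fin ℓ ⊕ Fin m) ℝ :=
    Matrix.vecMulVec (lvec p) (lvec p) - (4*c0) • qmat p with hMpdef
  set Mq : Matrix (Fin ℓ ⊕ Fin n) (Fin ℓ ⊕ Fin n) ℝ :=
    Matrix.vecMulVec (lvec q) (lvec q) - (4*c0) • qmat q with hMqdef
  have hMpval : ∀ w, w ⬝ᵥ Mp.mulVec w = (lval p w)^2 - 4*(qval p w)*c0 := by
    intro w
    rw [hMpdef, Mform_val]
    rfl
  have hMqval : ∀ w, w ⬝ᵥ Mq.mulVec w = (lval q w)^2 - 4*(qval q w)*c0 := by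
    intro w
    rw [hMqdef, Mform_val]
    rfl
  have hMppsd : ∀ w, 0 ≤ w ⬝ᵥ Mp.mulVec w := by
    intro w
    rw [hMpval]
    have h := hp w
    rw [lineEval p hdp w] at h
    have := (quadRR_iff c0 (lval p w) (qval p w) hc0).mp h
    linarith
  have hMqpsd : ∀ w, 0 ≤ w ⬝ᵥ Mq.mulVec w := by
    intro w
    rw [hMqval]
    have h := hq w
    rw [lineEval q hdq w, hc0q] at h
    have := (quadRR_iff c0 (lval q w) (qval q w) hc0).mp h
    linarith
  have hMpsym : ∀ s t, Mp s t = Mp t s := by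
    intro s t
    rw [hMpdef]
    simp only [Matrix.sub_apply, Matrix.smul_apply, Matrix.vecMulVec_apply, smul_eq_mul]
    rw [qmat_symm p s t, mul_comm (lvec p s)]
  have hMqsym : ∀ s t, Mq s t = Mq t s := by
    intro s t
    rw [hMqdef]
    simp only [Matrix.sub_apply, Matrix.smul_apply, Matrix.vecMulVec_apply, smul_eq_mul]
    rw [qmat_symm q s t, mul_comm (lvec q s)]
  have hagree : ∀ a : Fin ℓ → ℝ,
      Sum.elim a 0 ⬝ᵥ Mp.mulVec (Sum.elim a 0) = Sum.elim a 0 ⬝ᵥ Mq.mulVec (Sum.elim a 0) := by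
    intro a
    rw [hMpval, hMqval, (hcoeffs a).2.1, (hcoeffs a).2.2]
  obtain ⟨H0, hH0⟩ := core Mp Mq hMpsym hMqsym hMppsd hMqpsd hagree
  set hmat : Matrix (Fin m) (Fin n) ℝ :=
    Matrix.of fun j k => (lvec p (Sum.inr j) * lvec q (Sum.inr k) - H0 j k) / (2*c0) with hhm
  set S0 : MvPolynomial (Fin ℓ ⊕ (Fin m ⊕ Fin n)) ℝ :=
    aeval (Sum.elim (fun i => X (Sum.inl i)) (fun _ => 0)) p with hS0
  set Hpoly : MvPolynomial (Fin ℓ ⊕ (Fin m ⊕ Fin n)) ℝ :=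
    ∑ j, ∑ k, MvPolynomial.C (hmat j k) * X (Sum.inr (Sum.inl j)) * X (Sum.inr (Sum.inr k))
    with hHp
  refine ⟨rename (Sum.map id Sum.inl) p + rename (Sum.map id Sum.inr) q - S0 + Hpoly,
    ?_, ?_, ?_, ?_⟩
  · -- IsRealZero
    intro w
    set a : Fin ℓ → ℝ := fun i => w (Sum.inl i) with hadef
    set b : Fin m → ℝ := fun j => w (Sum.inr (Sum.inl j)) with hbdef
    set cc : Fin n → ℝ := fun k => w (Sum.inr (Sum.inr k)) with hccdef
    set Λ : ℝ := lval p (Sum.elim a b) + lval q (Sum.elim a cc) - lval p (Sum.elim a 0)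
      with hΛdef
    set Θ : ℝ := qval p (Sum.elim a b) + qval q (Sum.elim a cc) - qval p (Sum.elim a 0)
      + ∑ j, ∑ k, hmat j k * b j * cc k with hΘdef
    have tA : aeval (fun s => Polynomial.C (w s) * Polynomial.X)
        (rename (Sum.map id Sum.inl) p)
        = Polynomial.C c0 + Polynomial.C (lval p (Sum.elim a b)) * Polynomial.X
          + Polynomial.C (qval p (Sum.elim a b)) * Polynomial.X ^ 2 := by
      rw [aeval_rename]
      have e : ((fun s => Polynomial.C (w s) * Polynomial.X) ∘ Sum.map id Sum.inl)
          = fun s => Polynomial.C (Sum.elim a b s) * Polynomial.X := by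
        funext s; cases s <;> rfl
      rw [e, lineEval p hdp]
    have tB : aeval (fun s => Polynomial.C (w s) * Polynomial.X)
        (rename (Sum.map id Sum.inr) q)
        = Polynomial.C c0 + Polynomial.C (lval q (Sum.elim a cc)) * Polynomial.X
          + Polynomial.C (qval q (Sum.elim a cc)) * Polynomial.X ^ 2 := by
      rw [aeval_rename]
      have e : ((fun s => Polynomial.C (w s) * Polynomial.X) ∘ Sum.map id Sum.inr)
          = fun s => Polynomial.C (Sum.elim a cc s) * Polynomial.X := by
        funext s; cases s <;> rfl
      rw [e, lineEval q hdq, hc0q]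
    have tC : aeval (fun s => Polynomial.C (w s) * Polynomial.X) S0
        = Polynomial.C c0 + Polynomial.C (lval p (Sum.elim a 0)) * Polynomial.X
          + Polynomial.C (qval p (Sum.elim a 0)) * Polynomial.X ^ 2 := by
      rw [hS0, aeval_aeval_mv]
      have e : (fun i : Fin ℓ ⊕ Fin m =>
          aeval (fun s => Polynomial.C (w s) * Polynomial.X)
            (Sum.elim (fun i => (X (Sum.inl i) : MvPolynomial (Fin ℓ ⊕ (Fin m ⊕ Fin n)) ℝ))
              (fun _ => 0) i))
          = fun s => Polynomial.C (Sum.elim a (0 : Fin m → ℝ) s) * Polynomial.X := by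
        funext s; cases s <;> simp [hadef]
      rw [e, lineEval p hdp]
    have tD : aeval (fun s => Polynomial.C (w s) * Polynomial.X) Hpoly
        = Polynomial.C (∑ j, ∑ k, hmat j k * b j * cc k) * Polynomial.X ^ 2 := by
      rw [hHp, map_sum]
      have hterm : ∀ (j : Fin m) (k : Fin n),
          aeval (fun s => Polynomial.C (w s) * Polynomial.X)
            (MvPolynomial.C (hmat j k) * X (Sum.inr (Sum.inl j)) * X (Sum.inr (Sum.inr k)))
          = Polynomial.C (hmat j k * b j * cc k) * Polynomial.X ^ 2 := by
        intro j k
        rw [_root_.map_mul, _root_.map_mul, aeval_C, aeval_X, aeval_X]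
        rw [show (algebraMap ℝ (Polynomial ℝ)) (hmat j k) = Polynomial.C (hmat j k)
          from rfl]
        rw [show hmat j k * b j * cc k = hmat j k * (b j * cc k) by ring, _root_.map_mul,
          _root_.map_mul]
        ring
      calc (∑ j, aeval (fun s => Polynomial.C (w s) * Polynomial.X)
              (∑ k, MvPolynomial.C (hmat j k) * X (Sum.inr (Sum.inl j))
                * X (Sum.inr (Sum.inr k))))
          = ∑ j, ∑ k, Polynomial.C (hmat j k * b j * cc k) * Polynomial.X ^ 2 := by
            refine Finset.sum_congr rfl fun j _ => ?_
            rw [map_sum]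
            exact Finset.sum_congr rfl fun k _ => hterm j k
        _ = ∑ j, (∑ k, Polynomial.C (hmat j k * b j * cc k)) * Polynomial.X ^ 2 :=
            Finset.sum_congr rfl fun j _ => (Finset.sum_mul _ _ _).symm
        _ = (∑ j, ∑ k, Polynomial.C (hmat j k * b j * cc k)) * Polynomial.X ^ 2 :=
            (Finset.sum_mul _ _ _).symm
        _ = Polynomial.C (∑ j, ∑ k, hmat j k * b j * cc k) * Polynomial.X ^ 2 := by
            congr 1
            rw [map_sum]
            exact Finset.sum_congr rfl fun j _ => (map_sum _ _ _).symm
    have hur : aeval (fun s => Polynomial.C (w s) * Polynomial.X)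
        (rename (Sum.map id Sum.inl) p + rename (Sum.map id Sum.inr) q - S0 + Hpoly)
        = Polynomial.C c0 + Polynomial.C Λ * Polynomial.X
          + Polynomial.C Θ * Polynomial.X ^ 2 := by
      rw [map_add, map_sub, map_add, tA, tB, tC, tD, hΛdef, hΘdef]
      simp only [map_add, map_sub]
      ring
    rw [hur, quadRR_iff c0 Λ Θ hc0]
    -- the inequality
    set P1 := lval p (Sum.elim a b) with hP1
    set P2 := lval q (Sum.elim a cc) with hP2
    set S1 := lval p (Sum.elim a 0) with hS1
    have hS12 : lval q (Sum.elim a 0) = S1 := ((hcoeffs a).2.1).symm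
    have hLy : P1 - S1 = ∑ j, lvec p (Sum.inr j) * b j := by
      rw [hP1, hS1]
      simp only [lval]
      rw [lval_elim, lval_elim]
      simp
    have hLz : P2 - S1 = ∑ k, lvec q (Sum.inr k) * cc k := by
      rw [hP2, ← hS12]
      simp only [lval]
      rw [lval_elim, lval_elim]
      simp
    have hβ : b ⬝ᵥ H0.mulVec cc = ∑ j, ∑ k, H0 j k * b j * cc k := by
      simp only [dotProduct, Matrix.mulVec, Finset.mul_sum]
      exact Finset.sum_congr rfl fun j _ => Finset.sum_congr rfl fun k _ => by ring
    have h2c0 : (2*c0) ≠ 0 := by simp [hc0]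
    have hsum : (∑ j, ∑ k, hmat j k * b j * cc k) * (2*c0)
        = (P1 - S1) * (P2 - S1) - b ⬝ᵥ H0.mulVec cc := by
      rw [hLy, hLz, hβ, Finset.sum_mul_sum, ← Finset.sum_sub_distrib, Finset.sum_mul]
      refine Finset.sum_congr rfl fun j _ => ?_
      rw [Finset.sum_mul, ← Finset.sum_sub_distrib]
      refine Finset.sum_congr rfl fun k _ => ?_
      rw [hhm]
      simp only [Matrix.of_apply]
      field_simp
    have hkey := hH0 a b cc
    rw [hMpval, hMpval, hMqval] at hkey
    have hΘval : Θ = qval p (Sum.elim a b) + qval q (Sum.elim a cc) - qval p (Sum.elim a 0)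
        + ((P1 - S1) * (P2 - S1) - b ⬝ᵥ H0.mulVec cc)/(2*c0) := by
      rw [hΘdef]
      congr 1
      rw [eq_div_iff h2c0]
      exact hsum
    have hfin : Λ^2 - 4*Θ*c0
        = (P1^2 - 4*(qval p (Sum.elim a b))*c0) + (P2^2 - 4*(qval q (Sum.elim a cc))*c0)
          - (S1^2 - 4*(qval p (Sum.elim a 0))*c0) + 2*(b ⬝ᵥ H0.mulVec cc) := by
      rw [hΘval, hΛdef]
      field_simp
      ring
    linarith [hkey, hfin]
  · -- totalDegree
    have dA : (rename (Sum.map (id : Fin ℓ → Fin ℓ)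
        (Sum.inl : Fin m → Fin m ⊕ Fin n)) p).totalDegree ≤ 2 :=
      le_trans (totalDegree_rename_le _ _) hdp
    have dB : (rename (Sum.map (id : Fin ℓ → Fin ℓ)
        (Sum.inr : Fin n → Fin m ⊕ Fin n)) q).totalDegree ≤ 2 :=
      le_trans (totalDegree_rename_le _ _) hdq
    have dS : S0.totalDegree ≤ 2 := by
      rw [hS0]
      refine le_trans (totalDegree_aeval_le_mv _ ?_ p) hdp
      intro i
      cases i
      · exact le_of_eq (totalDegree_X _)
      · simp
    have dH : Hpoly.totalDegree ≤ 2 := by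
      rw [hHp]
      refine le_trans (totalDegree_finset_sum _ _) (Finset.sup_le fun j _ => ?_)
      refine le_trans (totalDegree_finset_sum _ _) (Finset.sup_le fun k _ => ?_)
      refine le_trans (totalDegree_mul _ _) ?_
      have h1 : (MvPolynomial.C (hmat j k)
          * (X (Sum.inr (Sum.inl j)) : MvPolynomial (Fin ℓ ⊕ (Fin m ⊕ Fin n)) ℝ)).totalDegree
          ≤ 1 := by
        refine le_trans (totalDegree_mul _ _) ?_
        rw [totalDegree_C, totalDegree_X]
      have h2 : ((X (Sum.inr (Sum.inr k)) : MvPolynomial (Fin ℓ ⊕ (Fin m ⊕ Fin n)) ℝ)).totalDegree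
          ≤ 1 := le_of_eq (totalDegree_X _)
      omega
    calc (rename (Sum.map id Sum.inl) p + rename (Sum.map id Sum.inr) q - S0
          + Hpoly).totalDegree
        ≤ (rename (Sum.map id Sum.inl) p + rename (Sum.map id Sum.inr) q - S0).totalDegree
          ⊔ Hpoly.totalDegree := totalDegree_add _ _
      _ ≤ 2 := by
          refine max_le ?_ dH
          rw [sub_eq_add_neg]
          refine le_trans (totalDegree_add _ _) (max_le ?_ ?_)
          · exact le_trans (totalDegree_add _ _) (max_le dA dB)
          · rw [totalDegree_neg]; exact dS
  · -- first restriction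
    simp only [map_add, map_sub]
    have t1 : aeval (Sum.elim (fun i : Fin ℓ => (X (Sum.inl i) : MvPolynomial (Fin ℓ ⊕ Fin m) ℝ))
        (Sum.elim (fun j : Fin m => X (Sum.inr j)) fun _ => 0))
        (rename (Sum.map (id : Fin ℓ → Fin ℓ) (Sum.inl : Fin m → Fin m ⊕ Fin n)) p) = p := by
      rw [aeval_rename]
      have e : (Sum.elim (fun i : Fin ℓ => (X (Sum.inl i) : MvPolynomial (Fin ℓ ⊕ Fin m) ℝ))
          (Sum.elim (fun j : Fin m => X (Sum.inr j)) fun _ => 0) ∘ Sum.map (id : Fin ℓ → Fin ℓ) (Sum.inl : Fin m → Fin m ⊕ Fin n)) = X := by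
        funext s; cases s <;> rfl
      rw [e, aeval_X_left_apply]
    have t2 : aeval (Sum.elim (fun i : Fin ℓ => (X (Sum.inl i) : MvPolynomial (Fin ℓ ⊕ Fin m) ℝ))
        (Sum.elim (fun j : Fin m => X (Sum.inr j)) fun _ => 0))
        (rename (Sum.map (id : Fin ℓ → Fin ℓ) (Sum.inr : Fin n → Fin m ⊕ Fin n)) q)
        = aeval (Sum.elim (fun i : Fin ℓ => (X (Sum.inl i) : MvPolynomial (Fin ℓ ⊕ Fin m) ℝ))
            (fun _ => 0)) q := by
      rw [aeval_rename]
      have e : (Sum.elim (fun i : Fin ℓ => (X (Sum.inl i) : MvPolynomial (Fin ℓ ⊕ Fin m) ℝ))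
          (Sum.elim (fun j : Fin m => X (Sum.inr j)) fun _ => 0) ∘ Sum.map (id : Fin ℓ → Fin ℓ) (Sum.inr : Fin n → Fin m ⊕ Fin n))
          = Sum.elim (fun i : Fin ℓ => (X (Sum.inl i) : MvPolynomial (Fin ℓ ⊕ Fin m) ℝ))
            (fun _ => 0) := by
        funext s; cases s <;> rfl
      rw [e]
    have t3 : aeval (Sum.elim (fun i : Fin ℓ => (X (Sum.inl i) : MvPolynomial (Fin ℓ ⊕ Fin m) ℝ))
        (Sum.elim (fun j : Fin m => X (Sum.inr j)) fun _ => 0)) S0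
        = aeval (Sum.elim (fun i : Fin ℓ => (X (Sum.inl i) : MvPolynomial (Fin ℓ ⊕ Fin m) ℝ))
            (fun _ => 0)) p := by
      rw [hS0, aeval_aeval_mv]
      have e : (fun i : Fin ℓ ⊕ Fin m =>
          aeval (Sum.elim (fun i : Fin ℓ => (X (Sum.inl i) : MvPolynomial (Fin ℓ ⊕ Fin m) ℝ))
            (Sum.elim (fun j : Fin m => X (Sum.inr j)) fun _ => 0))
          (Sum.elim (fun i => (X (Sum.inl i) : MvPolynomial (Fin ℓ ⊕ (Fin m ⊕ Fin n)) ℝ))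
            (fun _ => 0) i))
          = Sum.elim (fun i : Fin ℓ => (X (Sum.inl i) : MvPolynomial (Fin ℓ ⊕ Fin m) ℝ))
            (fun _ => 0) := by
        funext s; cases s <;> simp
      rw [e]
    have t23 : aeval (Sum.elim (fun i : Fin ℓ => (X (Sum.inl i) : MvPolynomial (Fin ℓ ⊕ Fin m) ℝ))
        (fun _ => 0)) q
        = aeval (Sum.elim (fun i : Fin ℓ => (X (Sum.inl i) : MvPolynomial (Fin ℓ ⊕ Fin m) ℝ))
            (fun _ => 0)) p := by
      have h := congrArg (rename (Sum.inl : Fin ℓ → Fin ℓ ⊕ Fin m)) hcompat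
      rw [rename_aeval_mv, rename_aeval_mv] at h
      have e1 : (fun i : Fin ℓ ⊕ Fin m =>
          rename (Sum.inl : Fin ℓ → Fin ℓ ⊕ Fin m)
            (Sum.elim (fun i => (X i : MvPolynomial (Fin ℓ) ℝ)) (fun _ => 0) i))
          = Sum.elim (fun i : Fin ℓ => (X (Sum.inl i) : MvPolynomial (Fin ℓ ⊕ Fin m) ℝ))
            (fun _ => 0) := by
        funext s; cases s <;> simp
      have e2 : (fun i : Fin ℓ ⊕ Fin n =>
          rename (Sum.inl : Fin ℓ → Fin ℓ ⊕ Fin m)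
            (Sum.elim (fun i => (X i : MvPolynomial (Fin ℓ) ℝ)) (fun _ => 0) i))
          = Sum.elim (fun i : Fin ℓ => (X (Sum.inl i) : MvPolynomial (Fin ℓ ⊕ Fin m) ℝ))
            (fun _ => 0) := by
        funext s; cases s <;> simp
      rw [e1, e2] at h
      exact h.symm
    have t4 : aeval (Sum.elim (fun i : Fin ℓ => (X (Sum.inl i) : MvPolynomial (Fin ℓ ⊕ Fin m) ℝ))
        (Sum.elim (fun j : Fin m => X (Sum.inr j)) fun _ => 0)) Hpoly = 0 := by
      rw [hHp, map_sum]
      refine Finset.sum_eq_zero fun j _ => ?_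
      rw [map_sum]
      refine Finset.sum_eq_zero fun k _ => ?_
      rw [_root_.map_mul, aeval_X]
      simp
    rw [t1, t2, t3, t23, t4]
    ring
  · -- second restriction
    simp only [map_add, map_sub]
    have t1 : aeval (Sum.elim (fun i : Fin ℓ => (X (Sum.inl i) : MvPolynomial (Fin ℓ ⊕ Fin n) ℝ))
        (Sum.elim (fun _ : Fin m => 0) fun k : Fin n => X (Sum.inr k)))
        (rename (Sum.map (id : Fin ℓ → Fin ℓ) (Sum.inl : Fin m → Fin m ⊕ Fin n)) p)
        = aeval (Sum.elim (fun i : Fin ℓ => (X (Sum.inl i) : MvPolynomial (Fin ℓ ⊕ Fin n) ℝ))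
            (fun _ => 0)) p := by
      rw [aeval_rename]
      have e : (Sum.elim (fun i : Fin ℓ => (X (Sum.inl i) : MvPolynomial (Fin ℓ ⊕ Fin n) ℝ))
          (Sum.elim (fun _ : Fin m => 0) fun k : Fin n => X (Sum.inr k)) ∘ Sum.map (id : Fin ℓ → Fin ℓ) (Sum.inl : Fin m → Fin m ⊕ Fin n))
          = Sum.elim (fun i : Fin ℓ => (X (Sum.inl i) : MvPolynomial (Fin ℓ ⊕ Fin n) ℝ))
            (fun _ => 0) := by
        funext s; cases s <;> rfl
      rw [e]
    have t2 : aeval (Sum.elim (fun i : Fin ℓ => (X (Sum.inl i) : MvPolynomial (Fin ℓ ⊕ Fin n) ℝ))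
        (Sum.elim (fun _ : Fin m => 0) fun k : Fin n => X (Sum.inr k)))
        (rename (Sum.map (id : Fin ℓ → Fin ℓ) (Sum.inr : Fin n → Fin m ⊕ Fin n)) q) = q := by
      rw [aeval_rename]
      have e : (Sum.elim (fun i : Fin ℓ => (X (Sum.inl i) : MvPolynomial (Fin ℓ ⊕ Fin n) ℝ))
          (Sum.elim (fun _ : Fin m => 0) fun k : Fin n => X (Sum.inr k)) ∘ Sum.map (id : Fin ℓ → Fin ℓ) (Sum.inr : Fin n → Fin m ⊕ Fin n))
          = X := by
        funext s; cases s <;> rfl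
      rw [e, aeval_X_left_apply]
    have t3 : aeval (Sum.elim (fun i : Fin ℓ => (X (Sum.inl i) : MvPolynomial (Fin ℓ ⊕ Fin n) ℝ))
        (Sum.elim (fun _ : Fin m => 0) fun k : Fin n => X (Sum.inr k))) S0
        = aeval (Sum.elim (fun i : Fin ℓ => (X (Sum.inl i) : MvPolynomial (Fin ℓ ⊕ Fin n) ℝ))
            (fun _ => 0)) p := by
      rw [hS0, aeval_aeval_mv]
      have e : (fun i : Fin ℓ ⊕ Fin m =>
          aeval (Sum.elim (fun i : Fin ℓ => (X (Sum.inl i) : MvPolynomial (Fin ℓ ⊕ Fin n) ℝ))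
            (Sum.elim (fun _ : Fin m => 0) fun k : Fin n => X (Sum.inr k)))
          (Sum.elim (fun i => (X (Sum.inl i) : MvPolynomial (Fin ℓ ⊕ (Fin m ⊕ Fin n)) ℝ))
            (fun _ => 0) i))
          = Sum.elim (fun i : Fin ℓ => (X (Sum.inl i) : MvPolynomial (Fin ℓ ⊕ Fin n) ℝ))
            (fun _ => 0) := by
        funext s; cases s <;> simp
      rw [e]
    have t4 : aeval (Sum.elim (fun i : Fin ℓ => (X (Sum.inl i) : MvPolynomial (Fin ℓ ⊕ Fin n) ℝ))
        (Sum.elim (fun _ : Fin m => 0) fun k : Fin n => X (Sum.inr k))) Hpoly = 0 := by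
      rw [hHp, map_sum]
      refine Finset.sum_eq_zero fun j _ => ?_
      rw [map_sum]
      refine Finset.sum_eq_zero fun k _ => ?_
      rw [_root_.map_mul, _root_.map_mul, aeval_X]
      simp
    rw [t1, t2, t3, t4]
    ring
end

section
/- Let M_1 be the matroid of rank 3 on the 7-element set {x_1,...,x_6,y} whose bases are all 3-element subsets except {y,x_1,x_4}, {y,x_3,x_6}, {y,x_2,x_5}, {x_1,x_2,x_3}, {x_4,x_5,x_6}, and let M_2 be the matroid of rank 3 on {x_1,...,x_6,z} whose bases are all 3-element subsets except {z,x_1,x_4}, {z,x_2,x_5}, {x_1,x_2,x_3}, {x_4,x_5,x_6}. Then M_1 and M_2 have no amalgam, i.e., there is no matroid M on a set containing {x_1,...,x_6,y,z} with M|{x_1,...,x_6,y} = M_1 and M|{x_1,...,x_6,z} = M_2. -/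
open Set

/-- The ground set of the matroid `M₁`: the elements `0,...,5` are `x₁,...,x₆`
and `6` is `y`. -/
def S1 : Set (Fin 8) := {0, 1, 2, 3, 4, 5, 6}

/-- The ground set of the matroid `M₂`: the elements `0,...,5` are `x₁,...,x₆`
and `7` is `z`. -/
def S2 : Set (Fin 8) := {0, 1, 2, 3, 4, 5, 7}

/-- The non-bases of `M₁`: `{y,x₁,x₄}, {y,x₃,x₆}, {y,x₂,x₅}, {x₁,x₂,x₃}, {x₄,x₅,x₆}`. -/
def Ex1 : Set (Set (Fin 8)) := {{6, 0, 3}, {6, 2, 5}, {6, 1, 4}, {0, 1, 2}, {3, 4, 5}}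

/-- The non-bases of `M₂`: `{z,x₁,x₄}, {z,x₂,x₅}, {x₁,x₂,x₃}, {x₄,x₅,x₆}`. -/
def Ex2 : Set (Set (Fin 8)) := {{7, 0, 3}, {7, 1, 4}, {0, 1, 2}, {3, 4, 5}}

/-- The matroids `M₁` and `M₂` of Poljak and Turzík have no amalgam: there is no
matroid `M` on a set containing `{x₁,...,x₆,y,z}` whose restriction to
`{x₁,...,x₆,y}` is `M₁` and whose restriction to `{x₁,...,x₆,z}` is `M₂`, where
`Mᵢ` is the rank-`3` matroid whose bases are all `3`-element subsets of its ground
set except the excluded ones. -/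
theorem stmt13 :
    ¬ ∃ (γ : Type) (f : Fin 8 ↪ γ) (M : Matroid γ),
        Set.range f ⊆ M.E ∧
        (∀ B : Set (Fin 8), ((M.comap f).restrict S1).IsBase B ↔
          (B ⊆ S1 ∧ B.ncard = 3 ∧ B ∉ Ex1)) ∧
        (∀ B : Set (Fin 8), ((M.comap f).restrict S2).IsBase B ↔
          (B ⊆ S2 ∧ B.ncard = 3 ∧ B ∉ Ex2)) := by
  rintro ⟨γ, f, M, hfE, h1, h2⟩
  set N := M.comap f with hNdef
  have hE : N.E = univ := by
    rw [hNdef, Matroid.comap_ground_eq, eq_univ_iff_forall]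
    exact fun x => hfE (mem_range_self x)
  have hEsub : ∀ X : Set (Fin 8), X ⊆ N.E := by
    intro X; rw [hE]; exact subset_univ X
  -- independent sets from bases of the restrictions
  have hind1 : ∀ B : Set (Fin 8), B ⊆ S1 → B.ncard = 3 → B ∉ Ex1 → N.Indep B := by
    intro B hs hc he
    exact ((h1 B).2 ⟨hs, hc, he⟩).indep.of_restrict
  have hind2 : ∀ B : Set (Fin 8), B ⊆ S2 → B.ncard = 3 → B ∉ Ex2 → N.Indep B := by
    intro B hs hc he
    exact ((h2 B).2 ⟨hs, hc, he⟩).indep.of_restrict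
  -- dependent sets from non-bases of the restrictions
  have hdep1 : ∀ B : Set (Fin 8), B ⊆ S1 → B.ncard = 3 → B ∈ Ex1 → ¬ N.Indep B := by
    intro B hs hc he hi
    obtain ⟨B', hB', hBB'⟩ := (hi.indep_restrict_of_subset hs).exists_isBase_superset
    obtain ⟨-, hc', he'⟩ := (h1 B').1 hB'
    have : B = B' := Set.eq_of_subset_of_ncard_le hBB' (by omega) (Set.toFinite B')
    exact he' (this ▸ he)
  have hdep2 : ∀ B : Set (Fin 8), B ⊆ S2 → B.ncard = 3 → B ∈ Ex2 → ¬ N.Indep B := by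
    intro B hs hc he hi
    obtain ⟨B', hB', hBB'⟩ := (hi.indep_restrict_of_subset hs).exists_isBase_superset
    obtain ⟨-, hc', he'⟩ := (h2 B').1 hB'
    have : B = B' := Set.eq_of_subset_of_ncard_le hBB' (by omega) (Set.toFinite B')
    exact he' (this ▸ he)
  -- basic independent sets
  have i013 : N.Indep {0, 1, 3} :=
    hind1 _ (by rw [S1, Set.subset_def]; decide)
      (by rw [Set.ncard_eq_toFinset_card']; decide)
      (by simp only [Ex1, mem_insert_iff, mem_singleton_iff, Set.ext_iff]; decide)
  have i014 : N.Indep {0, 1, 4} :=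
    hind1 _ (by rw [S1, Set.subset_def]; decide)
      (by rw [Set.ncard_eq_toFinset_card']; decide)
      (by simp only [Ex1, mem_insert_iff, mem_singleton_iff, Set.ext_iff]; decide)
  have i025 : N.Indep {0, 2, 5} :=
    hind1 _ (by rw [S1, Set.subset_def]; decide)
      (by rw [Set.ncard_eq_toFinset_card']; decide)
      (by simp only [Ex1, mem_insert_iff, mem_singleton_iff, Set.ext_iff]; decide)
  have i601 : N.Indep {6, 0, 1} :=
    hind1 _ (by rw [S1, Set.subset_def]; decide)
      (by rw [Set.ncard_eq_toFinset_card']; decide)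
      (by simp only [Ex1, mem_insert_iff, mem_singleton_iff, Set.ext_iff]; decide)
  have i725 : N.Indep {7, 2, 5} :=
    hind2 _ (by rw [S2, Set.subset_def]; decide)
      (by rw [Set.ncard_eq_toFinset_card']; decide)
      (by simp only [Ex2, mem_insert_iff, mem_singleton_iff, Set.ext_iff]; decide)
  have i03 : N.Indep {0, 3} := i013.subset (by rw [Set.subset_def]; decide)
  have i14 : N.Indep {1, 4} := i014.subset (by rw [Set.subset_def]; decide)
  have i25 : N.Indep {2, 5} := i025.subset (by rw [Set.subset_def]; decide)
  have i6 : N.Indep {6} := i601.subset (by rw [Set.subset_def]; decide)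
  -- dependent triples
  have d603 : ¬ N.Indep {6, 0, 3} :=
    hdep1 _ (by rw [S1, Set.subset_def]; decide)
      (by rw [Set.ncard_eq_toFinset_card']; decide) (Or.inl rfl)
  have d625 : ¬ N.Indep {6, 2, 5} :=
    hdep1 _ (by rw [S1, Set.subset_def]; decide)
      (by rw [Set.ncard_eq_toFinset_card']; decide) (Or.inr (Or.inl rfl))
  have d614 : ¬ N.Indep {6, 1, 4} :=
    hdep1 _ (by rw [S1, Set.subset_def]; decide)
      (by rw [Set.ncard_eq_toFinset_card']; decide) (Or.inr (Or.inr (Or.inl rfl)))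
  have d703 : ¬ N.Indep {7, 0, 3} :=
    hdep2 _ (by rw [S2, Set.subset_def]; decide)
      (by rw [Set.ncard_eq_toFinset_card']; decide) (Or.inl rfl)
  have d714 : ¬ N.Indep {7, 1, 4} :=
    hdep2 _ (by rw [S2, Set.subset_def]; decide)
      (by rw [Set.ncard_eq_toFinset_card']; decide) (Or.inr (Or.inl rfl))
  -- closure memberships
  have c603 : (6 : Fin 8) ∈ N.closure {0, 3} :=
    i03.mem_closure_iff.2 (Or.inl ⟨d603, hEsub _⟩)
  have c703 : (7 : Fin 8) ∈ N.closure {0, 3} :=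
    i03.mem_closure_iff.2 (Or.inl ⟨d703, hEsub _⟩)
  have c614 : (6 : Fin 8) ∈ N.closure {1, 4} :=
    i14.mem_closure_iff.2 (Or.inl ⟨d614, hEsub _⟩)
  have c714 : (7 : Fin 8) ∈ N.closure {1, 4} :=
    i14.mem_closure_iff.2 (Or.inl ⟨d714, hEsub _⟩)
  have c625 : (6 : Fin 8) ∈ N.closure {2, 5} :=
    i25.mem_closure_iff.2 (Or.inl ⟨d625, hEsub _⟩)
  -- key step : {6,7} is dependent
  have hdep67 : ¬ N.Indep {6, 7} := by
    intro h67
    -- {0,3} is a basis of X := {6,7,0,3}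
    have hX : N.IsBasis {0, 3} ({6, 7, 0, 3} : Set (Fin 8)) := by
      refine i03.isBasis_of_subset_of_subset_closure (by rw [Set.subset_def]; decide) ?_
      refine insert_subset c603 (insert_subset c703 (N.subset_closure _ (hEsub _)))
    -- extend {6,7} to a basis J of X
    obtain ⟨J, hJ, h67J⟩ := h67.subset_isBasis_of_subset
      (show ({6, 7} : Set (Fin 8)) ⊆ {6, 7, 0, 3} by rw [Set.subset_def]; decide) (hEsub _)
    have hcard : J.encard = 2 := by
      rw [hJ.encard_eq_encard hX]
      exact Set.encard_pair (by decide)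
    have hJeq : ({6, 7} : Set (Fin 8)) = J := by
      refine Set.Finite.eq_of_subset_of_encard_le (Set.toFinite _) h67J ?_
      rw [hcard, Set.encard_pair (by decide : (6 : Fin 8) ≠ 7)]
    rw [← hJeq] at hJ
    -- so 0 lies in the closure of {6,7}, which lies in the closure of {1,4}
    have h0 : (0 : Fin 8) ∈ N.closure {6, 7} :=
      hJ.subset_closure (by decide : (0 : Fin 8) ∈ ({6, 7, 0, 3} : Set (Fin 8)))
    have hsub : N.closure {6, 7} ⊆ N.closure {1, 4} :=
      N.closure_subset_closure_of_subset_closure (by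
        rw [Set.pair_subset_iff]; exact ⟨c614, c714⟩)
    have h014 : ¬ N.Indep {0, 1, 4} := by
      rcases i14.mem_closure_iff.1 (hsub h0) with h | h
      · exact h.1
      · exact absurd h (by decide)
    exact h014 i014
  -- hence 7 ∈ closure {6} ⊆ closure {2,5}
  have c76 : (7 : Fin 8) ∈ N.closure {6} := by
    refine i6.mem_closure_iff.2 (Or.inl ⟨?_, hEsub _⟩)
    rw [show (insert (7 : Fin 8) {6} : Set (Fin 8)) = {6, 7} from Set.pair_comm 7 6]
    exact hdep67
  have c725 : (7 : Fin 8) ∈ N.closure {2, 5} :=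
    N.closure_subset_closure_of_subset_closure
      (singleton_subset_iff.2 c625) c76
  -- contradiction : {7,2,5} is both independent and dependent
  rcases i25.mem_closure_iff.1 c725 with h | h
  · exact h.1 i725
  · exact absurd h (by decide)
end
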